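/- arXiv:2410.17811 — 5 statements merged into one kernel-verified Lean document; each statement's English description precedes it below -/
import Mathlib

section
/- Let n ≥ 3 and let P ⊂ ℝⁿ be a polytope with vertex set V and facet set 𝓕. Assume r·B₂ⁿ ⊂ P ⊂ B₂ⁿ for some r with 1/√(n−1) ≤ r ≤ 1. Then min{|𝓕|, |V|} ≥ ( 1 / (2(1−r)) )^{(n−1)/2}. -/
open Metric Set MeasureTheory
open scoped RealInnerProductSpace ENNReal Pointwise

abbrev Euc (n : ℕ) := EuclideanSpace ℝ (Fin n)

/-- The covering number `N(K, T)`: the minimal number of translates of `T`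
needed to cover `K`. -/
noncomputable def coveringNumber {n : ℕ} (K T : Set (Euc n)) : ℕ :=
  sInf {N : ℕ | ∃ x : Fin N → Euc n, K ⊆ ⋃ i, x i +ᵥ T}

/-- The radial function `ρ_K(θ) = sup {t ≥ 0 : tθ ∈ K}`. -/
noncomputable def radialFn {n : ℕ} (K : Set (Euc n)) (θ : Euc n) : ℝ :=
  sSup {t : ℝ | 0 ≤ t ∧ t • θ ∈ K}

/-- The support function `h_K(u) = sup {⟨x, u⟩ : x ∈ K}`. -/
noncomputable def suppFn {n : ℕ} (K : Set (Euc n)) (u : Euc n) : ℝ :=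
  sSup ((fun x => ⟪x, u⟫) '' K)

/-- `F` is a facet of `P ⊆ ℝⁿ`: a nonempty exposed face of dimension `n - 1`. -/
def IsFacet {n : ℕ} (P F : Set (Euc n)) : Prop :=
  F.Nonempty ∧ IsExposed ℝ P F ∧ Module.finrank ℝ (vectorSpan ℝ F) = n - 1

open Finset Module Topology

/-!
Forgetting the last coordinate maps the unit sphere of `ℝⁿ` onto the unit ball of `ℝⁿ⁻¹` and is
`1`-Lipschitz. A cap `{θ | r ≤ ⟪u, θ⟫}` of the sphere with `‖u‖ ≤ 1` lies within distance
`√(2(1-r))` of `u`, so if `N` such caps cover the sphere, then `N` balls of radius `√(2(1-r))`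
cover the unit ball of `ℝⁿ⁻¹`, and comparing volumes gives `N ≥ (2(1-r))^(-(n-1)/2)`.

The caps of the vertices cover the sphere: the vertex `w` maximising `⟪θ, ·⟫` has
`⟪w, θ⟫ ≥ ⟪rθ, θ⟫ = r`. So do the caps of the unit facet normals: the point where the ray through
`θ` leaves `P` lies on a facet `F`, and `r ≤ ⟪ν_F, ·⟫` on `F` because `r ν_F ∈ P`. That every
boundary point lies on a facet is seen by tilting a supporting hyperplane until its face has
dimension `n - 1`.
-/

section Counting

variable {E : Type*} [NormedAddCommGroup E] [NormedSpace ℝ E] [MeasurableSpace E] [BorelSpace E]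
  [FiniteDimensional ℝ E]

theorem inv_pow_finrank_le_card_of_closedBall_subset (μ : Measure E) [μ.IsAddHaarMeasure]
    {ι : Type*} (s : Finset ι) (c : ι → E) {ρ : ℝ} (hρ : 0 ≤ ρ)
    (hcov : closedBall (0 : E) 1 ⊆ ⋃ i ∈ s, closedBall (c i) ρ) :
    (ENNReal.ofReal ρ)⁻¹ ^ Module.finrank ℝ E ≤ s.card := by
  have hB : μ (closedBall (0 : E) 1)
      ≤ (s.card * ENNReal.ofReal ρ ^ Module.finrank ℝ E) * μ (closedBall (0 : E) 1) :=
    calc μ (closedBall (0 : E) 1) ≤ μ (⋃ i ∈ s, closedBall (c i) ρ) := measure_mono hcov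
      _ ≤ ∑ i ∈ s, μ (closedBall (c i) ρ) := measure_biUnion_finset_le s _
      _ = _ := by
        simp only [Measure.addHaar_closedBall' μ _ hρ, ENNReal.ofReal_pow hρ, Finset.sum_const,
          nsmul_eq_mul, mul_assoc]
  have hone : 1 ≤ s.card * ENNReal.ofReal ρ ^ Module.finrank ℝ E :=
    (ENNReal.mul_le_mul_iff_left (measure_closedBall_pos μ 0 one_pos).ne'
      measure_closedBall_lt_top.ne).1 (by rwa [one_mul])
  rw [← ENNReal.inv_pow, ENNReal.inv_le_iff_le_mul (fun h => absurd h (ENNReal.natCast_ne_top _))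
    (fun h => absurd h (ENNReal.pow_ne_top ENNReal.ofReal_ne_top)), mul_comm]
  exact hone

end Counting

section Projection

variable {m : ℕ}

def dropLast (x : Euc (m + 1)) : Euc m := WithLp.toLp 2 (Fin.init x.ofLp)

theorem dropLast_sub (x y : Euc (m + 1)) : dropLast (x - y) = dropLast x - dropLast y := rfl

theorem norm_sq_eq_norm_dropLast_sq_add (x : Euc (m + 1)) :
    ‖x‖ ^ 2 = ‖dropLast x‖ ^ 2 + x (Fin.last m) ^ 2 := by
  simp only [EuclideanSpace.norm_sq_eq, Fin.sum_univ_castSucc, Real.norm_eq_abs, sq_abs]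
  rfl

theorem dist_dropLast_le (x y : Euc (m + 1)) : dist (dropLast x) (dropLast y) ≤ dist x y := by
  rw [dist_eq_norm, dist_eq_norm, ← dropLast_sub]
  have := norm_sq_eq_norm_dropLast_sq_add (x - y)
  nlinarith [sq_nonneg ((x - y) (Fin.last m)), norm_nonneg (dropLast (x - y)), norm_nonneg (x - y)]

theorem exists_norm_eq_one_dropLast_eq {x : Euc m} (hx : ‖x‖ ≤ 1) :
    ∃ θ : Euc (m + 1), ‖θ‖ = 1 ∧ dropLast θ = x := by
  set θ : Euc (m + 1) := WithLp.toLp 2 (Fin.snoc x.ofLp √(1 - ‖x‖ ^ 2))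
  have hθ : dropLast θ = x := by simp [θ, dropLast]
  refine ⟨θ, ?_, hθ⟩
  have h := norm_sq_eq_norm_dropLast_sq_add θ
  rw [hθ, show θ (Fin.last m) = √(1 - ‖x‖ ^ 2) by simp [θ],
    Real.sq_sqrt (by nlinarith [norm_nonneg x]), add_sub_cancel] at h
  exact (pow_left_inj₀ (norm_nonneg θ) zero_le_one two_ne_zero).1 (by rw [h, one_pow])

end Projection

theorem norm_sub_le_sqrt_of_le_inner {n : ℕ} {u θ : Euc n} {r : ℝ} (hu : ‖u‖ ≤ 1) (hθ : ‖θ‖ = 1)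
    (h : r ≤ ⟪u, θ⟫) : ‖u - θ‖ ≤ √(2 * (1 - r)) := by
  rw [← abs_norm]
  apply Real.abs_le_sqrt
  rw [norm_sub_sq_real, hθ]
  nlinarith [norm_nonneg u]

theorem inv_rpow_le_card_of_forall_exists_le_inner {n : ℕ} (hn : 1 ≤ n) {ι : Type*}
    (s : Finset ι) (u : ι → Euc n) (hu : ∀ i ∈ s, ‖u i‖ ≤ 1) {r : ℝ} (hr : r ≤ 1)
    (hcov : ∀ θ : Euc n, ‖θ‖ = 1 → ∃ i ∈ s, r ≤ ⟪u i, θ⟫) :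
    (ENNReal.ofReal (2 * (1 - r)))⁻¹ ^ (((n : ℝ) - 1) / 2) ≤ s.card := by
  obtain ⟨m, rfl⟩ : ∃ m, n = m + 1 := ⟨n - 1, by omega⟩
  set ρ := √(2 * (1 - r))
  have hcovBall : closedBall (0 : Euc m) 1 ⊆ ⋃ i ∈ s, closedBall (dropLast (u i)) ρ := by
    intro x hx
    obtain ⟨θ, hθ, rfl⟩ := exists_norm_eq_one_dropLast_eq (mem_closedBall_zero_iff.1 hx)
    obtain ⟨i, hi, hri⟩ := hcov θ hθ
    refine mem_biUnion hi ((dist_dropLast_le _ _).trans ?_)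
    rw [dist_comm, dist_eq_norm]
    exact norm_sub_le_sqrt_of_le_inner (hu i hi) hθ hri
  have hcount := inv_pow_finrank_le_card_of_closedBall_subset volume s _ (Real.sqrt_nonneg _)
    hcovBall
  rw [finrank_euclideanSpace_fin] at hcount
  have hsq : ENNReal.ofReal (2 * (1 - r)) = ENNReal.ofReal ρ ^ 2 := by
    rw [← ENNReal.ofReal_pow (Real.sqrt_nonneg _), Real.sq_sqrt (by linarith)]
  convert hcount using 1
  rw [hsq, ENNReal.inv_pow, ← ENNReal.rpow_natCast, ← ENNReal.rpow_mul, ← ENNReal.rpow_natCast]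
  congr 1
  push_cast
  ring

section Faces

variable {E : Type*} [AddCommGroup E] [Module ℝ E]

theorem convexHull_filter_eq_inter (V : Finset E) {f : E → ℝ} (hf : IsLinearMap ℝ f) {c : ℝ}
    (hV : ∀ v ∈ V, f v ≤ c) :
    convexHull ℝ (↑{v ∈ V | f v = c} : Set E) = convexHull ℝ ↑V ∩ {x | f x = c} := by
  classical
  refine Subset.antisymm (subset_inter (convexHull_mono (coe_subset.2 (filter_subset _ _)))
    (convexHull_min (fun v hv => (mem_filter.1 hv).2) (convex_hyperplane hf c))) ?_
  rintro x ⟨hx, hfx : f x = c⟩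
  obtain ⟨w, hw0, hw1, rfl⟩ := Finset.mem_convexHull.1 hx
  have hsum : ∑ v ∈ V, w v * (c - f v) = 0 := by
    have hfsum : f (V.centerMass w id) = ∑ v ∈ V, w v * f v := by
      rw [Finset.centerMass_eq_of_sum_1 _ _ hw1, ← IsLinearMap.mk'_apply hf, map_sum]
      simp
    simp only [mul_sub, sum_sub_distrib, ← sum_mul, hw1, one_mul, ← hfsum, hfx, sub_self]
  -- a convex combination attaining the maximum `c` only charges points where `f = c`
  have hface : ∀ v ∈ V, w v ≠ 0 → f v = c := fun v hv hwv => by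
    have := (sum_eq_zero_iff_of_nonneg fun v hv =>
      mul_nonneg (hw0 v hv) (sub_nonneg.2 (hV v hv))).1 hsum v hv
    linarith [(mul_eq_zero.1 this).resolve_left hwv]
  rw [← Finset.centerMass_filter_ne_zero]
  refine Finset.centerMass_mem_convexHull _ (fun v hv => hw0 v (mem_filter.1 hv).1)
    (by rw [Finset.sum_filter_ne_zero, hw1]; exact one_pos) fun v hv => ?_
  obtain ⟨hvV, hwv⟩ := mem_filter.1 hv
  exact mem_coe.2 (mem_filter.2 ⟨hvV, hface v hvV hwv⟩)

theorem setOf_forall_le_eq_convexHull_filter (V : Finset E) {f : E → ℝ} (hf : IsLinearMap ℝ f)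
    {x₀ : E} (hx₀ : x₀ ∈ convexHull ℝ (V : Set E)) (hV : ∀ v ∈ V, f v ≤ f x₀) :
    {x ∈ convexHull ℝ (V : Set E) | ∀ z ∈ convexHull ℝ (V : Set E), f z ≤ f x} =
      convexHull ℝ (↑{v ∈ V | f v = f x₀} : Set E) := by
  have hmax : ∀ z ∈ convexHull ℝ (V : Set E), f z ≤ f x₀ :=
    convexHull_min hV (convex_halfSpace_le hf _)
  rw [convexHull_filter_eq_inter V hf hV]
  ext x
  exact ⟨fun ⟨hx, hxmax⟩ => ⟨hx, le_antisymm (hmax x hx) (hxmax x₀ hx₀)⟩,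
    fun ⟨hx, hfx⟩ => ⟨hx, fun z hz => hfx ▸ hmax z hz⟩⟩

theorem finite_setOf_isExposed_convexHull [TopologicalSpace E] (V : Finset E) :
    {F | F.Nonempty ∧ IsExposed ℝ (convexHull ℝ (V : Set E)) F}.Finite := by
  refine (V.powerset.finite_toSet.image fun A : Finset E => convexHull ℝ (A : Set E)).subset ?_
  rintro F ⟨⟨x₀, hx₀⟩, hexp⟩
  obtain ⟨l, rfl⟩ := hexp ⟨x₀, hx₀⟩
  exact ⟨_, mem_coe.2 (mem_powerset.2 (filter_subset _ _)),
    (setOf_forall_le_eq_convexHull_filter V l.toLinearMap.isLinear hx₀.1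
      fun v hv => hx₀.2 v (subset_convexHull ℝ _ hv)).symm⟩

end Faces

theorem exists_pos_forall_add_mul_le {ι : Type*} (s : Finset ι) {f g : ι → ℝ} {c d : ℝ}
    (hf : ∀ i ∈ s, f i ≤ c) (hg : ∀ i ∈ s, f i = c → g i = d) (hex : ∃ i ∈ s, d < g i) :
    ∃ t > 0, (∀ i ∈ s, f i + t * g i ≤ c + t * d) ∧
      {i ∈ s | f i = c} ⊂ {i ∈ s | f i + t * g i = c + t * d} := by
  classical
  set B := {i ∈ s | d < g i}
  have hB : B.Nonempty := by simpa [B, Finset.Nonempty] using hex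
  have hBf : ∀ i ∈ B, f i < c := fun i hi => by
    obtain ⟨his, hdg⟩ := mem_filter.1 hi
    exact (hf i his).lt_of_ne fun h => (hg i his h).not_gt hdg
  -- the largest tilt keeping every point below the tilted level
  set t := B.inf' hB fun i => (c - f i) / (g i - d)
  have hBt : ∀ i ∈ B, t * (g i - d) ≤ c - f i := fun i hi =>
    (le_div_iff₀ (sub_pos.2 (mem_filter.1 hi).2)).1 (inf'_le _ hi)
  obtain ⟨i₁, hi₁, ht⟩ := exists_mem_eq_inf' hB fun i => (c - f i) / (g i - d)
  have hi₁s := (mem_filter.1 hi₁).1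
  have ht0 : 0 < t := (lt_inf'_iff hB).2 fun i hi =>
    div_pos (sub_pos.2 (hBf i hi)) (sub_pos.2 (mem_filter.1 hi).2)
  refine ⟨t, ht0, fun i hi => ?_, ?_⟩
  · by_cases hgi : d < g i
    · linarith [hBt i (mem_filter.2 ⟨hi, hgi⟩)]
    · nlinarith [hf i hi]
  · rw [Finset.ssubset_iff_of_subset fun i hi => ?_]
    · refine ⟨i₁, mem_filter.2 ⟨hi₁s, ?_⟩, fun h => (hBf i₁ hi₁).ne (mem_filter.1 h).2⟩
      have : t * (g i₁ - d) = c - f i₁ := by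
        rw [show t = _ from ht, div_mul_cancel₀ _ (sub_pos.2 (mem_filter.1 hi₁).2).ne']
      linarith
    · obtain ⟨his, hfi⟩ := mem_filter.1 hi
      exact mem_filter.2 ⟨his, by rw [hfi, hg i his hfi]⟩

section InnerProduct

variable {E : Type*} [NormedAddCommGroup E] [InnerProductSpace ℝ E]

theorem vectorSpan_le_orthogonal_of_inner_eq {s : Set E} {u : E} {c : ℝ}
    (h : ∀ v ∈ s, ⟪u, v⟫ = c) : vectorSpan ℝ s ≤ (ℝ ∙ u)ᗮ := by
  rw [vectorSpan_def, Submodule.span_le]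
  rintro _ ⟨a, ha, b, hb, rfl⟩
  simp only [SetLike.mem_coe, Submodule.mem_orthogonal_singleton_iff_inner_right, vsub_eq_sub,
    inner_sub_right, h a ha, h b hb, sub_self]

theorem exists_inner_ne_of_vectorSpan_eq_top {s : Set E} (hs : vectorSpan ℝ s = ⊤) {w : E}
    (hw : w ≠ 0) (c : ℝ) : ∃ v ∈ s, ⟪w, v⟫ ≠ c := by
  by_contra! h
  have hww : w ∈ (ℝ ∙ w)ᗮ :=
    vectorSpan_le_orthogonal_of_inner_eq h (hs ▸ Submodule.mem_top)
  exact hw (inner_self_eq_zero.1 (Submodule.mem_orthogonal_singleton_iff_inner_right.1 hww))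

theorem inner_eq_of_mem_orthogonal_vectorSpan {s : Set E} {w : E}
    (hw : w ∈ (vectorSpan ℝ s)ᗮ) {x y : E} (hx : x ∈ affineSpan ℝ s) (hy : y ∈ affineSpan ℝ s) :
    ⟪w, x⟫ = ⟪w, y⟫ := by
  have := Submodule.inner_left_of_mem_orthogonal
    (vsub_mem_vectorSpan_of_mem_affineSpan_of_mem_affineSpan hx hy) hw
  rwa [vsub_eq_sub, inner_sub_right, sub_eq_zero] at this

theorem Convex.exists_ne_zero_inner_le_of_notMem_interior [CompleteSpace E] {s : Set E}
    (hs : Convex ℝ s) (hint : (interior s).Nonempty) {y : E} (hy : y ∉ interior s) :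
    ∃ u ≠ 0, ∀ z ∈ s, ⟪u, z⟫ ≤ ⟪u, y⟫ := by
  obtain ⟨f, hf⟩ := geometric_hahn_banach_open_point hs.interior isOpen_interior hy
  set u := (InnerProductSpace.toDual ℝ E).symm f
  have hu : ∀ z, ⟪u, z⟫ = f z := fun z => InnerProductSpace.toDual_symm_apply
  obtain ⟨a, ha⟩ := hint
  refine ⟨u, fun h => ?_, fun z hz => ?_⟩
  · have := hf a ha
    rw [← hu, ← hu, h, inner_zero_left, inner_zero_left] at this
    exact this.false
  · have hcl : z ∈ closure (interior s) := by
      rw [hs.closure_interior_eq_closure_of_nonempty_interior ⟨a, ha⟩]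
      exact subset_closure hz
    rw [hu, hu]
    exact le_on_closure (fun x hx => (hf x hx).le) f.continuous.continuousOn continuousOn_const hcl

theorem le_inner_of_closedBall_subset {P : Set E} {r : ℝ} (hr : 0 ≤ r)
    (hball : closedBall (0 : E) r ⊆ P) {u x : E} (hu : ‖u‖ = 1)
    (hx : ∀ z ∈ P, ⟪u, z⟫ ≤ ⟪u, x⟫) : r ≤ ⟪u, x⟫ := by
  have := hx (r • u) (hball (by simp [norm_smul, hu, abs_of_nonneg hr]))
  rwa [real_inner_smul_right, real_inner_self_eq_norm_sq, hu, one_pow, mul_one] at this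

variable [FiniteDimensional ℝ E]

theorem finrank_vectorSpan_add_one_le {s : Set E} {u : E} (hu : u ≠ 0) {c : ℝ}
    (h : ∀ v ∈ s, ⟪u, v⟫ = c) : finrank ℝ (vectorSpan ℝ s) + 1 ≤ finrank ℝ E := by
  have := (ℝ ∙ u).finrank_add_finrank_orthogonal
  rw [finrank_span_singleton hu] at this
  have := Submodule.finrank_mono (vectorSpan_le_orthogonal_of_inner_eq h)
  omega

theorem exists_ne_zero_mem_orthogonal_of_finrank_lt {K : Submodule ℝ E}
    (hK : finrank ℝ K < finrank ℝ E) : ∃ w ∈ Kᗮ, w ≠ 0 := by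
  refine Submodule.exists_mem_ne_zero_of_ne_bot fun h => hK.ne ?_
  rw [Submodule.orthogonal_eq_bot_iff.1 h, finrank_top]

theorem exists_ne_zero_filter_ssubset (V : Finset E) (hV : vectorSpan ℝ (V : Set E) = ⊤)
    {u y : E} (hu : u ≠ 0) (hsupp : ∀ v ∈ V, ⟪u, v⟫ ≤ ⟪u, y⟫)
    (hy : y ∈ convexHull ℝ (↑{v ∈ V | ⟪u, v⟫ = ⟪u, y⟫} : Set E))
    (hdim : finrank ℝ (vectorSpan ℝ (↑{v ∈ V | ⟪u, v⟫ = ⟪u, y⟫} : Set E)) + 1 < finrank ℝ E) :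
    ∃ u' ≠ 0, (∀ v ∈ V, ⟪u', v⟫ ≤ ⟪u', y⟫) ∧
      {v ∈ V | ⟪u, v⟫ = ⟪u, y⟫} ⊂ {v ∈ V | ⟪u', v⟫ = ⟪u', y⟫} := by
  set A := {v ∈ V | ⟪u, v⟫ = ⟪u, y⟫}
  -- tilt `u` along a direction `w` orthogonal to `u` and to the face
  obtain ⟨w, hwK, hw0⟩ := exists_ne_zero_mem_orthogonal_of_finrank_lt
    ((Submodule.finrank_add_le_finrank_add_finrank (vectorSpan ℝ (A : Set E)) (ℝ ∙ u)).trans_lt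
      (by rwa [finrank_span_singleton hu]))
  have hwu : ⟪w, u⟫ = 0 := Submodule.inner_left_of_mem_orthogonal
    (Submodule.mem_sup_right (Submodule.mem_span_singleton_self u)) hwK
  have hwA : ∀ v ∈ A, ⟪w, v⟫ = ⟪w, y⟫ := fun v hv =>
    inner_eq_of_mem_orthogonal_vectorSpan (Submodule.orthogonal_le le_sup_left hwK)
      (subset_affineSpan ℝ _ hv) (convexHull_subset_affineSpan _ hy)
  have tilt : ∀ w' : E, w' ≠ 0 → ⟪w', u⟫ = 0 → (∀ v ∈ A, ⟪w', v⟫ = ⟪w', y⟫) →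
      (∃ v ∈ V, ⟪w', y⟫ < ⟪w', v⟫) → ∃ u' ≠ 0, (∀ v ∈ V, ⟪u', v⟫ ≤ ⟪u', y⟫) ∧
        A ⊂ {v ∈ V | ⟪u', v⟫ = ⟪u', y⟫} := by
    intro w' hw'0 hw'u hw'A hex
    obtain ⟨t, ht0, hle, hss⟩ := exists_pos_forall_add_mul_le V hsupp
      (fun v hv h => hw'A v (mem_filter.2 ⟨hv, h⟩)) hex
    have hinner : ∀ x, ⟪u + t • w', x⟫ = ⟪u, x⟫ + t * ⟪w', x⟫ := fun x => by
      rw [inner_add_left, real_inner_smul_left]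
    refine ⟨u + t • w', fun h => ?_, fun v hv => by simpa only [hinner] using hle v hv,
      by simpa only [hinner] using hss⟩
    have := congrArg (⟪w', ·⟫) h
    simp only [inner_add_right, hw'u, real_inner_smul_right, inner_zero_right, zero_add] at this
    exact hw'0 (inner_self_eq_zero.1 ((mul_eq_zero.1 this).resolve_left ht0.ne'))
  obtain ⟨v, hv, hne⟩ := exists_inner_ne_of_vectorSpan_eq_top hV hw0 ⟪w, y⟫
  rcases hne.lt_or_gt with hlt | hgt
  · exact tilt (-w) (neg_ne_zero.2 hw0) (by rw [inner_neg_left, hwu, neg_zero])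
      (fun v hv => by rw [inner_neg_left, inner_neg_left, hwA v hv])
      ⟨v, hv, by rw [inner_neg_left, inner_neg_left]; exact neg_lt_neg hlt⟩
  · exact tilt w hw0 hwu hwA ⟨v, hv, hgt⟩

end InnerProduct

theorem inv_gauge_smul_mem_frontier {E : Type*} [NormedAddCommGroup E] [NormedSpace ℝ E]
    {s : Set E} (hc : Convex ℝ s) (hs₀ : s ∈ 𝓝 0) (hb : Bornology.IsBounded s) {x : E}
    (hx : x ≠ 0) : (gauge s x)⁻¹ • x ∈ frontier s := by
  have hpos : 0 < gauge s x :=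
    (gauge_pos (absorbent_nhds_zero hs₀) (NormedSpace.isVonNBounded_of_isBounded ℝ hb)).2 hx
  rw [← gauge_eq_one_iff_mem_frontier hc hs₀, gauge_smul_of_nonneg (inv_nonneg.2 hpos.le),
    smul_eq_mul, inv_mul_cancel₀ hpos.ne']

theorem IsCompact.exists_mem_extremePoints_forall_le {E : Type*} [AddCommGroup E] [Module ℝ E]
    [TopologicalSpace E] [T2Space E] [IsTopologicalAddGroup E] [ContinuousSMul ℝ E]
    [LocallyConvexSpace ℝ E] {s : Set E} (hs : IsCompact s) (hne : s.Nonempty)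
    (l : StrongDual ℝ E) : ∃ x ∈ s.extremePoints ℝ, ∀ z ∈ s, l z ≤ l x := by
  set G := {x ∈ s | ∀ z ∈ s, l z ≤ l x}
  have hexp : IsExposed ℝ s G := fun _ => ⟨l, rfl⟩
  obtain ⟨x₀, hx₀, hmax⟩ := hs.exists_isMaxOn hne l.continuous.continuousOn
  obtain ⟨x, hx⟩ := (hs.of_isClosed_subset (hexp.isClosed hs.isClosed) fun _ h => h.1)
    |>.extremePoints_nonempty ⟨x₀, hx₀, fun z hz => hmax hz⟩
  exact ⟨x, hexp.isExtreme.extremePoints_subset_extremePoints hx, hx.1.2⟩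

theorem exists_mem_extremePoints_le_inner {E : Type*} [NormedAddCommGroup E]
    [InnerProductSpace ℝ E] {P : Set E} (hP : IsCompact P) {r : ℝ} (hr : 0 ≤ r)
    (hball : closedBall (0 : E) r ⊆ P) {θ : E} (hθ : ‖θ‖ = 1) :
    ∃ w ∈ P.extremePoints ℝ, r ≤ ⟪w, θ⟫ := by
  obtain ⟨w, hw, hmax⟩ :=
    hP.exists_mem_extremePoints_forall_le ⟨0, hball (mem_closedBall_self hr)⟩ (innerSL ℝ θ)
  simp only [innerSL_apply_apply] at hmax
  exact ⟨w, hw, real_inner_comm θ w ▸ le_inner_of_closedBall_subset hr hball hθ hmax⟩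

variable {n : ℕ}

theorem IsFacet.exists_unit_normal (hn : 1 ≤ n) {P F : Set (Euc n)}
    (hP : (interior P).Nonempty) (hF : IsFacet P F) :
    ∃ u : Euc n, ‖u‖ = 1 ∧ ∀ x ∈ F, ∀ z ∈ P, ⟪u, z⟫ ≤ ⟪u, x⟫ := by
  have hspan : vectorSpan ℝ P = ⊤ := AffineSubspace.vectorSpan_eq_top_of_affineSpan_eq_top ℝ _ _
    (top_unique (isOpen_interior.affineSpan_eq_top hP ▸ affineSpan_mono ℝ interior_subset))
  obtain ⟨hne, hexp, hdim⟩ := hF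
  obtain ⟨l, rfl⟩ := hexp hne
  set u := (InnerProductSpace.toDual ℝ (Euc n)).symm l
  have hu : ∀ z, ⟪u, z⟫ = l z := fun z => InnerProductSpace.toDual_symm_apply
  have hu0 : u ≠ 0 := by
    intro h
    have hall : {x ∈ P | ∀ z ∈ P, l z ≤ l x} = P := by
      ext x
      simp [← hu, h]
    rw [hall, hspan, finrank_top, finrank_euclideanSpace_fin] at hdim
    omega
  refine ⟨‖u‖⁻¹ • u, norm_smul_inv_norm hu0, fun x hx z hz => ?_⟩
  simp only [real_inner_smul_left, hu]
  exact mul_le_mul_of_nonneg_left (hx.2 z hz) (inv_nonneg.2 (norm_nonneg u))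

theorem exists_isFacet_mem_of_mem_frontier (V : Finset (Euc n))
    (hint : (interior (convexHull ℝ (V : Set (Euc n)))).Nonempty) {y : Euc n}
    (hy : y ∈ frontier (convexHull ℝ (V : Set (Euc n)))) :
    ∃ F, IsFacet (convexHull ℝ (V : Set (Euc n))) F ∧ y ∈ F := by
  classical
  have hyP : y ∈ convexHull ℝ (V : Set (Euc n)) :=
    (V.finite_toSet.isCompact_convexHull (𝕜 := ℝ)).isClosed.frontier_subset hy
  have hV : vectorSpan ℝ (V : Set (Euc n)) = ⊤ :=
    AffineSubspace.vectorSpan_eq_top_of_affineSpan_eq_top ℝ _ _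
      (affineSpan_eq_top_of_nonempty_interior hint)
  -- among the vertex sets cut out by supporting directions at `y`, take one of maximal size
  set S := V.powerset.filter fun A => ∃ u ≠ 0, (∀ v ∈ V, ⟪u, v⟫ ≤ ⟪u, y⟫) ∧
    A = {v ∈ V | ⟪u, v⟫ = ⟪u, y⟫}
  have hS : S.Nonempty := by
    obtain ⟨u, hu, hsupp⟩ :=
      Convex.exists_ne_zero_inner_le_of_notMem_interior (convex_convexHull ℝ _) hint hy.2
    exact ⟨_, mem_filter.2 ⟨mem_powerset.2 (filter_subset _ _), u, hu,
      fun v hv => hsupp v (subset_convexHull ℝ _ hv), rfl⟩⟩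
  obtain ⟨A, hA, hmax⟩ := S.exists_max_image card hS
  obtain ⟨-, u, hu, hsupp, rfl⟩ := mem_filter.1 hA
  have hlin : IsLinearMap ℝ fun v : Euc n => ⟪u, v⟫ := (innerₛₗ ℝ u).isLinear
  have hyA : y ∈ convexHull ℝ (↑{v ∈ V | ⟪u, v⟫ = ⟪u, y⟫} : Set (Euc n)) := by
    rw [convexHull_filter_eq_inter V hlin hsupp]
    exact ⟨hyP, rfl⟩
  refine ⟨_, ⟨⟨y, hyA⟩, fun _ => ⟨innerSL ℝ u, ?_⟩, ?_⟩, hyA⟩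
  · simpa only [innerSL_apply_apply] using
      (setOf_forall_le_eq_convexHull_filter V hlin hyP hsupp).symm
  rw [← direction_affineSpan, affineSpan_convexHull, direction_affineSpan]
  by_contra hdim
  have hle := finrank_vectorSpan_add_one_le
    (s := (↑{v ∈ V | ⟪u, v⟫ = ⟪u, y⟫} : Set (Euc n))) hu fun v hv => (mem_filter.1 hv).2
  rw [finrank_euclideanSpace_fin] at hle
  obtain ⟨u', hu', hsupp', hss⟩ := exists_ne_zero_filter_ssubset V hV hu hsupp hyA
    (by rw [finrank_euclideanSpace_fin]; omega)
  exact (hmax _ (mem_filter.2 ⟨mem_powerset.2 (filter_subset _ _), u', hu', hsupp', rfl⟩)).not_gt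
    (card_lt_card hss)

theorem exists_isFacet_le_inner (V : Finset (Euc n)) {r : ℝ} (hr : 0 < r)
    (hball : closedBall (0 : Euc n) r ⊆ convexHull ℝ (V : Set (Euc n)))
    (hP1 : convexHull ℝ (V : Set (Euc n)) ⊆ closedBall (0 : Euc n) 1)
    (ν : Set (Euc n) → Euc n) (hν : ∀ F, IsFacet (convexHull ℝ (V : Set (Euc n))) F →
      ‖ν F‖ = 1 ∧ ∀ x ∈ F, ∀ z ∈ convexHull ℝ (V : Set (Euc n)), ⟪ν F, z⟫ ≤ ⟪ν F, x⟫)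
    {θ : Euc n} (hθ : ‖θ‖ = 1) :
    ∃ F, IsFacet (convexHull ℝ (V : Set (Euc n))) F ∧ r ≤ ⟪ν F, θ⟫ := by
  set P := convexHull ℝ (V : Set (Euc n))
  have hP0 : P ∈ 𝓝 0 := Filter.mem_of_superset (closedBall_mem_nhds 0 hr) hball
  -- `t • θ` is the point where the ray through `θ` leaves `P`
  set t := (gauge P θ)⁻¹
  have hy : t • θ ∈ frontier P := inv_gauge_smul_mem_frontier (convex_convexHull ℝ _) hP0
    (isBounded_closedBall.subset hP1) (norm_ne_zero_iff.1 (by rw [hθ]; exact one_ne_zero))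
  obtain ⟨F, hF, hyF⟩ :=
    exists_isFacet_mem_of_mem_frontier V ⟨0, mem_interior_iff_mem_nhds.2 hP0⟩ hy
  obtain ⟨hν1, hνmax⟩ := hν F hF
  have hrt : r ≤ t * ⟪ν F, θ⟫ := by
    rw [← real_inner_smul_right]
    exact le_inner_of_closedBall_subset hr.le hball hν1 (hνmax _ hyF)
  have ht0 : 0 ≤ t := inv_nonneg.2 (gauge_nonneg θ)
  have ht1 : t ≤ 1 := by
    have := hP1 ((V.finite_toSet.isCompact_convexHull (𝕜 := ℝ)).isClosed.frontier_subset hy)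
    rwa [mem_closedBall_zero_iff, norm_smul, hθ, mul_one, Real.norm_of_nonneg ht0] at this
  have hpos : 0 < ⟪ν F, θ⟫ := by
    by_contra! h
    linarith [mul_nonpos_of_nonneg_of_nonpos ht0 h]
  exact ⟨F, hF, hrt.trans (mul_le_of_le_one_left hpos.le ht1)⟩

/-- If `P ⊆ ℝⁿ` (`n ≥ 3`) is a polytope with `r·B₂ⁿ ⊆ P ⊆ B₂ⁿ` for some
`1/√(n−1) ≤ r ≤ 1`, then both the number of facets and the number of vertices of `P` are at
least `(1/(2(1−r)))^{(n−1)/2}` (stated in `ℝ≥0∞`, so that for `r = 1` the right-hand side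
is `+∞` and the statement asserts the situation is impossible). -/
theorem many_faces_of_polytope_close_to_ball {n : ℕ} (hn : 3 ≤ n)
    (V : Finset (Euc n)) (P : Set (Euc n)) (hP : P = convexHull ℝ (V : Set (Euc n)))
    (r : ℝ) (hr1 : 1 / Real.sqrt ((n : ℝ) - 1) ≤ r) (hr2 : r ≤ 1)
    (hball : closedBall (0 : Euc n) r ⊆ P) (hP1 : P ⊆ closedBall (0 : Euc n) 1) :
    (ENNReal.ofReal (2 * (1 - r)))⁻¹ ^ (((n : ℝ) - 1) / 2) ≤
      (min {F : Set (Euc n) | IsFacet P F}.ncard (P.extremePoints ℝ).ncard : ℝ≥0∞) := by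
  have hr0 : 0 < r := lt_of_lt_of_le (one_div_pos.2 (Real.sqrt_pos.2 (by
    have : (3 : ℝ) ≤ n := by exact_mod_cast hn
    linarith))) hr1
  subst hP
  have hP0 : (0 : Euc n) ∈ interior (convexHull ℝ (V : Set (Euc n))) :=
    mem_interior_iff_mem_nhds.2 (Filter.mem_of_superset (closedBall_mem_nhds 0 hr0) hball)
  have hFfin : {F | IsFacet (convexHull ℝ (V : Set (Euc n))) F}.Finite :=
    (finite_setOf_isExposed_convexHull V).subset fun F hF => ⟨hF.1, hF.2.1⟩
  have hWfin := V.finite_toSet.subset (extremePoints_convexHull_subset (𝕜 := ℝ))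
  choose! ν hν using fun F (hF : IsFacet (convexHull ℝ (V : Set (Euc n))) F) =>
    hF.exists_unit_normal (by omega) ⟨0, hP0⟩
  rw [Set.ncard_eq_toFinset_card _ hFfin, Set.ncard_eq_toFinset_card _ hWfin]
  refine le_min ?_ ?_
  · refine inv_rpow_le_card_of_forall_exists_le_inner (by omega) _ ν
      (fun F hF => (hν F (hFfin.mem_toFinset.1 hF)).1.le) hr2 fun θ hθ => ?_
    obtain ⟨F, hF, hrF⟩ := exists_isFacet_le_inner V hr0 hball hP1 ν hν hθ
    exact ⟨F, hFfin.mem_toFinset.2 hF, hrF⟩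
  · refine inv_rpow_le_card_of_forall_exists_le_inner (by omega) _ id
      (fun w hw => mem_closedBall_zero_iff.1 (hP1 (hWfin.mem_toFinset.1 hw).1)) hr2
      fun θ hθ => ?_
    obtain ⟨w, hw, hrw⟩ := exists_mem_extremePoints_le_inner
      (V.finite_toSet.isCompact_convexHull (𝕜 := ℝ)) hr0.le hball hθ
    exact ⟨w, hWfin.mem_toFinset.2 hw, hrw⟩
end

section
/- Let n ≥ 1, ε ∈ (0,1), and let K ⊂ ℝⁿ be a set with 0 ∈ K such that K ⊂ ⋃_{i=1}^N (x_i + B₂ⁿ) for some points x₁,…,x_N ∈ ℝⁿ. Suppose θ ∈ S^{n−1} satisfies |⟨x_i/|x_i|, θ⟩| ≤ ε for every i with x_i ≠ 0. Then every t ≥ 0 with tθ ∈ K satisfies t ≤ 1/√(1−ε²); in particular, if K is a convex body with 0 in its interior, then ρ_K(θ) ≤ 1/√(1−ε²). -/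
open Metric Set MeasureTheory
open scoped RealInnerProductSpace ENNReal Pointwise

/- If `tθ` lies within distance `1` of a center `c` that is almost orthogonal to `θ`, then
`1 ≥ ‖tθ - c‖² ≥ t² - 2εt‖c‖ + ‖c‖² = (1 - ε²)t² + (εt - ‖c‖)² ≥ (1 - ε²)t²`. -/

section InnerProductSpace

variable {E : Type*} [NormedAddCommGroup E] [InnerProductSpace ℝ E]

theorem abs_inner_le_mul_norm_of_abs_inner_normalize_le {c θ : E} {ε : ℝ}
    (h : c ≠ 0 → |⟪‖c‖⁻¹ • c, θ⟫| ≤ ε) : |⟪c, θ⟫| ≤ ε * ‖c‖ := by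
  rcases eq_or_ne c 0 with rfl | hc
  · simp
  · have hc' : 0 < ‖c‖ := norm_pos_iff.mpr hc
    have := h hc
    rw [real_inner_smul_left, abs_mul, abs_inv, abs_norm, inv_mul_le_iff₀ hc'] at this
    linarith

theorem one_sub_sq_mul_sq_le_of_norm_smul_sub_le {θ c : E} {t ε r : ℝ} (hθ : ‖θ‖ = 1)
    (ht : 0 ≤ t) (hc : ⟪θ, c⟫ ≤ ε * ‖c‖) (h : ‖t • θ - c‖ ≤ r) :
    (1 - ε ^ 2) * t ^ 2 ≤ r ^ 2 := by
  have hexpand : ‖t • θ - c‖ ^ 2 = t ^ 2 - 2 * (t * ⟪θ, c⟫) + ‖c‖ ^ 2 := by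
    rw [norm_sub_sq_real, norm_smul, real_inner_smul_left, Real.norm_of_nonneg ht, hθ]
    ring
  have hsq : ‖t • θ - c‖ ^ 2 ≤ r ^ 2 := pow_le_pow_left₀ (norm_nonneg _) h 2
  nlinarith [sq_nonneg (ε * t - ‖c‖), mul_le_mul_of_nonneg_left hc ht]

end InnerProductSpace

theorem le_one_div_sqrt_of_mul_sq_le_one {a t : ℝ} (ha : 0 < a) (ht : 0 ≤ t)
    (h : a * t ^ 2 ≤ 1) : t ≤ 1 / Real.sqrt a := by
  rw [le_div_iff₀ (Real.sqrt_pos.mpr ha), ← Real.sqrt_sq ht, ← Real.sqrt_mul (sq_nonneg t)]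
  exact Real.sqrt_le_one.mpr (by linarith)

theorem radialFn_le {n : ℕ} {K : Set (Euc n)} {θ : Euc n} {b : ℝ} (hb : 0 ≤ b)
    (h : ∀ t : ℝ, 0 ≤ t → t • θ ∈ K → t ≤ b) : radialFn K θ ≤ b :=
  Real.sSup_le (fun t ht => h t ht.1 ht.2) hb

theorem radial_bound_on_A_eps_general {n : ℕ} (ε : ℝ) (hε : ε ∈ Set.Ioo (0 : ℝ) 1)
    (K : Set (Euc n))
    (N : ℕ) (x : Fin N → Euc n)
    (hcover : K ⊆ ⋃ i, x i +ᵥ closedBall (0 : Euc n) 1)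
    (θ : Euc n) (hθ : θ ∈ sphere (0 : Euc n) 1)
    (hortho : ∀ i, x i ≠ 0 → |⟪‖x i‖⁻¹ • x i, θ⟫| ≤ ε) :
    (∀ t : ℝ, 0 ≤ t → t • θ ∈ K → t ≤ 1 / Real.sqrt (1 - ε ^ 2)) ∧
      (IsCompact K → Convex ℝ K → 0 ∈ interior K →
        radialFn K θ ≤ 1 / Real.sqrt (1 - ε ^ 2)) := by
  have hε2 : 0 < 1 - ε ^ 2 := by nlinarith [hε.1, hε.2]
  have hbound : ∀ t : ℝ, 0 ≤ t → t • θ ∈ K → t ≤ 1 / Real.sqrt (1 - ε ^ 2) := by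
    intro t ht htK
    obtain ⟨i, hi⟩ := mem_iUnion.mp (hcover htK)
    rw [vadd_closedBall, vadd_eq_add, add_zero, mem_closedBall, dist_eq_norm] at hi
    have hxi : ⟪θ, x i⟫ ≤ ε * ‖x i‖ := by
      rw [real_inner_comm]
      exact (le_abs_self _).trans (abs_inner_le_mul_norm_of_abs_inner_normalize_le (hortho i))
    refine le_one_div_sqrt_of_mul_sq_le_one hε2 ht ?_
    simpa using one_sub_sq_mul_sq_le_of_norm_smul_sub_le (mem_sphere_zero_iff_norm.mp hθ) ht hxi hi
  exact ⟨hbound, fun _ _ _ => radialFn_le (by positivity) hbound⟩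

/-- Let `K ⊆ ℝⁿ` with `0 ∈ K` be covered by unit balls centered at `x₁, …, x_N`, let
`ε ∈ (0,1)`, and let `θ ∈ S^{n−1}` be `ε`-orthogonal to every normalized center.
Then every `t ≥ 0` with `tθ ∈ K` satisfies `t ≤ 1/√(1−ε²)`; in particular, if `K` is a
convex body with `0` in its interior, then `ρ_K(θ) ≤ 1/√(1−ε²)`. -/
theorem radial_bound_on_A_eps {n : ℕ} (hn : 1 ≤ n) (ε : ℝ) (hε : ε ∈ Set.Ioo (0 : ℝ) 1)
    (K : Set (Euc n)) (h0K : (0 : Euc n) ∈ K)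
    (N : ℕ) (x : Fin N → Euc n)
    (hcover : K ⊆ ⋃ i, x i +ᵥ closedBall (0 : Euc n) 1)
    (θ : Euc n) (hθ : θ ∈ sphere (0 : Euc n) 1)
    (hortho : ∀ i, x i ≠ 0 → |⟪‖x i‖⁻¹ • x i, θ⟫| ≤ ε) :
    (∀ t : ℝ, 0 ≤ t → t • θ ∈ K → t ≤ 1 / Real.sqrt (1 - ε ^ 2)) ∧
      (IsCompact K → Convex ℝ K → 0 ∈ interior K →
        radialFn K θ ≤ 1 / Real.sqrt (1 - ε ^ 2)) :=
  radial_bound_on_A_eps_general ε hε K N x hcover θ hθ hortho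
end

section
/- Let n ≥ 2, let u ∈ S^{n−1}, and let h ∈ (0,1). Then the rotation-invariant probability measure of the spherical cap C(u,h) = {θ ∈ S^{n−1} : ⟨u, θ⟩ ≥ h} satisfies σ(C(u,h)) ≤ (2(1−h))^{(n−1)/2} / (h·√(n−1)). -/
open Metric Set MeasureTheory
open scoped RealInnerProductSpace ENNReal Pointwise

/-!
By rotation invariance of `σ` and of Lebesgue measure, Fubini on `σ × vol|_B`
identifies `σ(C(u,h))` with the proportion of the unit ball `B` filled by the cone
`{x : h‖x‖ ≤ ⟨u,x⟩}`. Slicing that cone orthogonally to `u`, the slice at height `t` lies in an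
`(n-1)`-ball of radius `min (t√(1-h²)/h) √(1-t²)`, and integrating gives `vol(cone ∩ B)` at most
`(1-h²)^((n-1)/2) / (h n)` times the volume of the unit `(n-1)`-ball. The ratio of the volumes of
the unit balls in dimensions `n-1` and `n` is at most `√((n+1)/(2π))` by log-convexity of `Γ`;
the rest is `1 - h² ≤ 2(1 - h)`.
-/

section RotationInvariance

variable {E : Type*} [NormedAddCommGroup E] [InnerProductSpace ℝ E]

theorem exists_linearIsometryEquiv_apply_eq {u v : E} (huv : ‖u‖ = ‖v‖) :
    ∃ R : E ≃ₗᵢ[ℝ] E, R u = v :=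
  ⟨Submodule.reflection (ℝ ∙ (u - v))ᗮ, Submodule.reflection_sub huv⟩

variable [MeasurableSpace E] [BorelSpace E]

theorem measure_setOf_norm_inner_eq_of_norm_eq (μ : Measure E)
    (hμ : ∀ e : E ≃ₗᵢ[ℝ] E, μ.map e = μ) (P : ℝ → ℝ → Prop) {u v : E} (huv : ‖u‖ = ‖v‖) :
    μ {x | P ‖x‖ ⟪u, x⟫} = μ {x | P ‖x‖ ⟪v, x⟫} := by
  obtain ⟨R, rfl⟩ := exists_linearIsometryEquiv_apply_eq huv
  conv_rhs => rw [← hμ R, show ⇑R = R.toHomeomorph.toMeasurableEquiv from rfl,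
    MeasurableEquiv.map_apply]
  congr! 1 with x
  simp [R.norm_map, R.inner_map_map]

variable [FiniteDimensional ℝ E] [Nontrivial E]

theorem measure_cap_mul_volume_ball (σ : Measure E) [IsProbabilityMeasure σ]
    (hσsph : σ (sphere (0 : E) 1)ᶜ = 0) (hσinv : ∀ e : E ≃ₗᵢ[ℝ] E, σ.map e = σ)
    (h : ℝ) {u : E} (hu : ‖u‖ = 1) :
    σ {θ | h ≤ ⟪u, θ⟫} * volume (ball (0 : E) 1) =
      volume {x : E | h * ‖x‖ ≤ ⟪u, x⟫ ∧ ‖x‖ < 1} := by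
  set μ := volume.restrict (ball (0 : E) 1)
  -- All `θ`-slices of `A` (for `θ` on the sphere) have the same volume, and all `x`-slices
  -- (for `x ≠ 0`) are caps of height `h`, so both iterated integrals are constant.
  set A : Set (E × E) := {p | h * ‖p.2‖ ≤ ⟪p.1, p.2⟫}
  have hA : MeasurableSet A := measurableSet_le (by fun_prop) (by fun_prop)
  have hθ_slice : ∀ θ ∈ sphere (0 : E) 1,
      μ (Prod.mk θ ⁻¹' A) = volume {x : E | h * ‖x‖ ≤ ⟪u, x⟫ ∧ ‖x‖ < 1} := by
    intro θ hθ
    rw [Measure.restrict_apply' measurableSet_ball]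
    refine .trans ?_ (measure_setOf_norm_inner_eq_of_norm_eq volume
      (fun e => e.measurePreserving.map_eq) (fun r s => h * r ≤ s ∧ r < 1)
      ((mem_sphere_zero_iff_norm.1 hθ).trans hu.symm))
    congr 1
    ext x
    simp [A]
  have hx_slice : ∀ x : E, x ≠ 0 → σ ((fun θ => (θ, x)) ⁻¹' A) = σ {θ | h ≤ ⟪u, θ⟫} := by
    intro x hx
    have hx' : 0 < ‖x‖ := norm_pos_iff.2 hx
    refine .trans ?_ (measure_setOf_norm_inner_eq_of_norm_eq σ hσinv (fun _ s => h ≤ s)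
      (u := ‖x‖⁻¹ • x) (by rw [hu, norm_smul, norm_inv, norm_norm, inv_mul_cancel₀ hx'.ne']))
    congr 1
    ext θ
    simp only [A, Set.mem_preimage, Set.mem_ofPred_eq, real_inner_smul_left, real_inner_comm x]
    rw [le_inv_mul_iff₀ hx', mul_comm]
  calc σ {θ | h ≤ ⟪u, θ⟫} * volume (ball (0 : E) 1)
      = ∫⁻ x, σ ((fun θ => (θ, x)) ⁻¹' A) ∂μ := by
        rw [← setLIntegral_const]
        refine (lintegral_congr_ae ?_).symm
        filter_upwards [ae_restrict_of_ae (volume.ae_ne (0 : E))] with x hx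
        exact hx_slice x hx
    _ = (σ.prod μ) A := (Measure.prod_apply_symm hA).symm
    _ = ∫⁻ θ, μ (Prod.mk θ ⁻¹' A) ∂σ := Measure.prod_apply hA
    _ = ∫⁻ _θ, volume {x : E | h * ‖x‖ ≤ ⟪u, x⟫ ∧ ‖x‖ < 1} ∂σ := by
        refine lintegral_congr_ae ?_
        filter_upwards [mem_ae_iff.2 hσsph] with θ hθ
        exact hθ_slice θ hθ
    _ = volume {x : E | h * ‖x‖ ≤ ⟪u, x⟫ ∧ ‖x‖ < 1} := by simp

end RotationInvariance

open Real

theorem integral_mul_one_sub_sq_rpow {p : ℝ} (hp : 0 ≤ p) (a b : ℝ) :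
    ∫ t in a..b, t * (1 - t ^ 2) ^ p =
      ((1 - a ^ 2) ^ (p + 1) - (1 - b ^ 2) ^ (p + 1)) / (2 * (p + 1)) := by
  have hderiv : ∀ t, HasDerivAt (fun s => -(1 - s ^ 2) ^ (p + 1) / (2 * (p + 1)))
      (t * (1 - t ^ 2) ^ p) t := by
    intro t
    have h1 : HasDerivAt (fun s : ℝ => 1 - s ^ 2) (-(2 * t)) t := by
      simpa using (hasDerivAt_pow 2 t).const_sub 1
    refine (((hasDerivAt_rpow_const (p := p + 1) (Or.inr (by linarith))).comp t h1).neg.div_const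
      (2 * (p + 1))).congr_deriv ?_
    rw [add_sub_cancel_right]
    field_simp
  rw [intervalIntegral.integral_eq_sub_of_hasDerivAt (fun t _ => hderiv t)
    (Continuous.intervalIntegrable (by fun_prop (disch := exact Or.inr hp)) a b)]
  ring

noncomputable def capSliceRadius (h t : ℝ) : ℝ := min (t * √(1 - h ^ 2) / h) √(1 - t ^ 2)

theorem continuous_capSliceRadius (h : ℝ) : Continuous (capSliceRadius h) := by
  unfold capSliceRadius
  fun_prop

theorem capSliceRadius_nonneg {h t : ℝ} (hh : 0 ≤ h) (ht : 0 ≤ t) : 0 ≤ capSliceRadius h t :=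
  le_min (by positivity) (sqrt_nonneg _)

theorem le_capSliceRadius {h t r : ℝ} (hh : 0 < h) (hr : 0 ≤ r)
    (hcone : h * √(t ^ 2 + r ^ 2) ≤ t) (hball : √(t ^ 2 + r ^ 2) < 1) :
    0 ≤ t ∧ t ≤ 1 ∧ r ≤ capSliceRadius h t := by
  have ht : 0 ≤ t := (by positivity : 0 ≤ h * √(t ^ 2 + r ^ 2)).trans hcone
  have hsq : t ^ 2 + r ^ 2 < 1 := by
    rwa [sqrt_lt' one_pos, one_pow] at hball
  have hcone_sq : h ^ 2 * (t ^ 2 + r ^ 2) ≤ t ^ 2 := by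
    have := pow_le_pow_left₀ (by positivity) hcone 2
    rwa [mul_pow, sq_sqrt (by positivity)] at this
  refine ⟨ht, by nlinarith, le_min ?_ ?_⟩
  · rw [le_div_iff₀ hh, mul_comm r]
    calc h * r = √((h * r) ^ 2) := (sqrt_sq (by positivity)).symm
      _ ≤ √(t ^ 2 * (1 - h ^ 2)) := sqrt_le_sqrt (by nlinarith)
      _ = t * √(1 - h ^ 2) := by rw [sqrt_mul (sq_nonneg t), sqrt_sq ht]
  · exact le_sqrt_of_sq_le (by linarith)

theorem integral_capSliceRadius_pow_le (m : ℕ) {h : ℝ} (hh0 : 0 < h) (hh1 : h < 1) :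
    ∫ t in (0 : ℝ)..1, capSliceRadius h t ^ m ≤ (1 - h ^ 2) ^ ((m : ℝ) / 2) / (h * (m + 1)) := by
  have h1h : 0 < 1 - h ^ 2 := by nlinarith
  have hint : ∀ a b : ℝ, IntervalIntegrable (fun t => capSliceRadius h t ^ m) volume a b :=
    fun a b => ((continuous_capSliceRadius h).pow m).intervalIntegrable a b
  have hcone : ∫ t in (0 : ℝ)..h, capSliceRadius h t ^ m ≤
      (1 - h ^ 2) ^ ((m : ℝ) / 2) * (h / (m + 1)) := by
    calc ∫ t in (0 : ℝ)..h, capSliceRadius h t ^ m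
        ≤ ∫ t in (0 : ℝ)..h, (√(1 - h ^ 2) / h) ^ m * t ^ m := by
          refine intervalIntegral.integral_mono_on hh0.le (hint 0 h)
            (Continuous.intervalIntegrable (by fun_prop) 0 h) fun t ht => ?_
          rw [← mul_pow, mul_comm, ← mul_div_assoc]
          exact pow_le_pow_left₀ (capSliceRadius_nonneg hh0.le ht.1) (min_le_left _ _) m
      _ = (1 - h ^ 2) ^ ((m : ℝ) / 2) * (h / (m + 1)) := by
          rw [intervalIntegral.integral_const_mul, integral_pow, rpow_div_two_eq_sqrt _ h1h.le,
            rpow_natCast, div_pow]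
          field_simp
          ring
  have hcap : ∫ t in h..1, capSliceRadius h t ^ m ≤
      (1 - h ^ 2) ^ ((m : ℝ) / 2) * ((1 - h ^ 2) / (h * (m + 2))) := by
    calc ∫ t in h..1, capSliceRadius h t ^ m
        ≤ ∫ t in h..1, h⁻¹ * (t * (1 - t ^ 2) ^ ((m : ℝ) / 2)) := by
          refine intervalIntegral.integral_mono_on hh1.le (hint h 1)
            (Continuous.intervalIntegrable (by fun_prop (disch := positivity)) h 1)
            fun t ht => ?_
          have ht1 : 0 ≤ 1 - t ^ 2 := by nlinarith [ht.2, ht.1]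
          calc capSliceRadius h t ^ m ≤ √(1 - t ^ 2) ^ m :=
                pow_le_pow_left₀ (capSliceRadius_nonneg hh0.le (hh0.le.trans ht.1))
                  (min_le_right _ _) m
            _ = (1 - t ^ 2) ^ ((m : ℝ) / 2) := by rw [rpow_div_two_eq_sqrt _ ht1, rpow_natCast]
            _ ≤ h⁻¹ * (t * (1 - t ^ 2) ^ ((m : ℝ) / 2)) := by
                rw [← mul_assoc]
                exact le_mul_of_one_le_left (by positivity)
                  ((one_le_inv_mul₀ hh0).2 ht.1)
      _ = (1 - h ^ 2) ^ ((m : ℝ) / 2) * ((1 - h ^ 2) / (h * (m + 2))) := by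
          rw [intervalIntegral.integral_const_mul, integral_mul_one_sub_sq_rpow (by positivity),
            one_pow, sub_self, zero_rpow (by positivity), sub_zero, rpow_add h1h, rpow_one]
          field_simp
  rw [← intervalIntegral.integral_add_adjacent_intervals (hint 0 h) (hint h 1)]
  calc _ ≤ (1 - h ^ 2) ^ ((m : ℝ) / 2) * (h / (m + 1) + (1 - h ^ 2) / (h * (m + 2))) := by
        rw [mul_add]
        exact add_le_add hcone hcap
    _ ≤ (1 - h ^ 2) ^ ((m : ℝ) / 2) * (1 / (h * (m + 1))) := by
        gcongr
        rw [div_add_div _ _ (by positivity) (by positivity), div_le_div_iff₀ (by positivity)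
          (by positivity)]
        nlinarith [mul_pos hh0 h1h]
    _ = (1 - h ^ 2) ^ ((m : ℝ) / 2) / (h * (m + 1)) := by ring

theorem Real.Gamma_add_half_le_sqrt_mul_Gamma {x : ℝ} (hx : 0 < x) :
    Gamma (x + 1 / 2) ≤ √x * Gamma x := by
  have hconv := Gamma_mul_add_mul_le_rpow_Gamma_mul_rpow_Gamma hx (by linarith : 0 < x + 1)
    (by norm_num : (0 : ℝ) < 1 / 2) (by norm_num : (0 : ℝ) < 1 / 2) (by norm_num)
  have hΓ := Gamma_pos_of_pos hx
  rwa [Gamma_add_one hx.ne', ← sqrt_eq_rpow, ← sqrt_eq_rpow, ← sqrt_mul hΓ.le,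
    show Gamma x * (x * Gamma x) = x * Gamma x ^ 2 by ring, sqrt_mul hx.le, sqrt_sq hΓ.le,
    show 1 / 2 * x + 1 / 2 * (x + 1) = x + 1 / 2 by ring] at hconv

theorem volume_ball_le_mul_volume_ball_succ {m : ℕ} (hm : 0 < m) :
    volume (ball (0 : Euc m) 1) ≤
      ENNReal.ofReal √((m + 2) / (2 * π)) * volume (ball (0 : Euc (m + 1)) 1) := by
  have : Nonempty (Fin m) := ⟨⟨0, hm⟩⟩
  rw [EuclideanSpace.volume_ball, EuclideanSpace.volume_ball, Fintype.card_fin, Fintype.card_fin,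
    ENNReal.ofReal_one, one_pow, one_pow, one_mul, one_mul, ← ENNReal.ofReal_mul (sqrt_nonneg _)]
  refine ENNReal.ofReal_le_ofReal ?_
  have hΓ := Gamma_pos_of_pos (by positivity : (0 : ℝ) < m / 2 + 1)
  have hΓ' := Gamma_pos_of_pos (by positivity : (0 : ℝ) < ((m + 1 : ℕ) : ℝ) / 2 + 1)
  have hk : √((m + 2) / (2 * π)) * √π = √((m : ℝ) / 2 + 1) := by
    rw [← sqrt_mul (by positivity)]
    congr 1
    field_simp
  have hgamma : Gamma (((m + 1 : ℕ) : ℝ) / 2 + 1) ≤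
      √((m + 2) / (2 * π)) * √π * Gamma (m / 2 + 1) := by
    rw [hk, show ((m + 1 : ℕ) : ℝ) / 2 + 1 = (m / 2 + 1) + 1 / 2 by push_cast; ring]
    exact Gamma_add_half_le_sqrt_mul_Gamma (by positivity)
  rw [mul_div_assoc', le_div_iff₀ hΓ', div_mul_eq_mul_div, div_le_iff₀ hΓ, pow_succ]
  calc √π ^ m * Gamma (((m + 1 : ℕ) : ℝ) / 2 + 1)
      ≤ √π ^ m * (√((m + 2) / (2 * π)) * √π * Gamma (m / 2 + 1)) :=
        mul_le_mul_of_nonneg_left hgamma (by positivity)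
    _ = _ := by ring

theorem sqrt_div_two_pi_mul_sqrt_le (m : ℕ) : √((m + 2) / (2 * π)) * √m ≤ m + 1 := by
  rw [← sqrt_mul (by positivity)]
  refine sqrt_le_iff.2 ⟨by positivity, ?_⟩
  rw [div_mul_eq_mul_div, div_le_iff₀ (by positivity)]
  nlinarith [pi_gt_three]

section Coordinates

variable (m : ℕ)

noncomputable def euclideanCons : ℝ × Euc m ≃ᵐ Euc (m + 1) :=
  (MeasurableEquiv.prodCongr (MeasurableEquiv.refl ℝ)
      (MeasurableEquiv.toLp 2 (Fin m → ℝ)).symm).trans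
    ((MeasurableEquiv.piFinSuccAbove (fun _ => ℝ) 0).symm.trans
      (MeasurableEquiv.toLp 2 (Fin (m + 1) → ℝ)))

theorem measurePreserving_euclideanCons :
    MeasurePreserving (euclideanCons m) (volume.prod volume) volume :=
  ((MeasurePreserving.id volume).prod
      (EuclideanSpace.volume_preserving_symm_measurableEquiv_toLp (Fin m))).trans
    ((volume_preserving_piFinSuccAbove (fun _ => ℝ) 0).symm.trans
      (EuclideanSpace.volume_preserving_symm_measurableEquiv_toLp (Fin (m + 1))).symm)

variable {m}

theorem euclideanCons_apply (t : ℝ) (y : Euc m) :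
    euclideanCons m (t, y) = WithLp.toLp 2 (Fin.cons t y.ofLp) := by
  simp [euclideanCons, MeasurableEquiv.prodCongr, MeasurableEquiv.piFinSuccAbove_symm_apply,
    Fin.insertNthEquiv, Fin.insertNth_zero']

theorem euclideanCons_apply_zero (t : ℝ) (y : Euc m) : euclideanCons m (t, y) 0 = t := by
  simp [euclideanCons_apply]

theorem norm_euclideanCons (t : ℝ) (y : Euc m) :
    ‖euclideanCons m (t, y)‖ = √(t ^ 2 + ‖y‖ ^ 2) := by
  rw [EuclideanSpace.norm_eq, EuclideanSpace.real_norm_sq_eq (n := Fin m) y, euclideanCons_apply,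
    Fin.sum_univ_succ]
  simp

end Coordinates

theorem volume_cone_le (m : ℕ) {h : ℝ} (hh0 : 0 < h) (hh1 : h < 1) :
    volume {x : Euc (m + 1) | h * ‖x‖ ≤ x 0 ∧ ‖x‖ < 1} ≤
      ENNReal.ofReal ((1 - h ^ 2) ^ ((m : ℝ) / 2) / (h * (m + 1))) *
        volume (ball (0 : Euc m) 1) := by
  set S := {x : Euc (m + 1) | h * ‖x‖ ≤ x 0 ∧ ‖x‖ < 1}
  have hS : MeasurableSet S :=
    (measurableSet_le (f := fun x : Euc (m + 1) => h * ‖x‖) (by fun_prop) (by fun_prop)).inter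
      (measurableSet_lt (f := fun x : Euc (m + 1) => ‖x‖) (by fun_prop) measurable_const)
  have hmem : ∀ t y, (t, y) ∈ euclideanCons m ⁻¹' S →
      0 ≤ t ∧ t ≤ 1 ∧ ‖y‖ ≤ capSliceRadius h t := by
    rintro t y ⟨hcone, hball⟩
    rw [norm_euclideanCons, euclideanCons_apply_zero] at hcone
    rw [norm_euclideanCons] at hball
    exact le_capSliceRadius hh0 (norm_nonneg y) hcone hball
  have hslice : ∀ t, volume (Prod.mk t ⁻¹' (euclideanCons m ⁻¹' S)) ≤ (Icc 0 1).indicator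
      (fun t => ENNReal.ofReal (capSliceRadius h t ^ m) * volume (ball (0 : Euc m) 1)) t := by
    intro t
    by_cases ht : t ∈ Icc (0 : ℝ) 1
    · calc volume (Prod.mk t ⁻¹' (euclideanCons m ⁻¹' S))
          ≤ volume (closedBall (0 : Euc m) (capSliceRadius h t)) :=
            measure_mono fun y hy => mem_closedBall_zero_iff.2 (hmem t y hy).2.2
        _ = _ := by
          rw [Measure.addHaar_closedBall _ _ (capSliceRadius_nonneg hh0.le ht.1),
            finrank_euclideanSpace_fin, indicator_of_mem ht]
    · rw [indicator_of_notMem ht]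
      refine (measure_mono fun y hy => ht ⟨(hmem t y hy).1, (hmem t y hy).2.1⟩ :
        _ ≤ volume (∅ : Set (Euc m))).trans_eq measure_empty
  have hρ : Continuous fun t => capSliceRadius h t ^ m := (continuous_capSliceRadius h).pow m
  calc volume S = ∫⁻ t, volume (Prod.mk t ⁻¹' (euclideanCons m ⁻¹' S)) := by
        rw [← (measurePreserving_euclideanCons m).measure_preimage hS.nullMeasurableSet,
          Measure.prod_apply (hS.preimage (euclideanCons m).measurable)]
    _ ≤ ∫⁻ t, (Icc 0 1).indicator
          (fun t => ENNReal.ofReal (capSliceRadius h t ^ m) * volume (ball (0 : Euc m) 1)) t :=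
        lintegral_mono hslice
    _ = ENNReal.ofReal (∫ t in (0 : ℝ)..1, capSliceRadius h t ^ m) *
          volume (ball (0 : Euc m) 1) := by
        rw [lintegral_indicator measurableSet_Icc,
          lintegral_mul_const _ hρ.measurable.ennreal_ofReal,
          intervalIntegral.integral_of_le zero_le_one, ← integral_Icc_eq_integral_Ioc,
          ofReal_integral_eq_lintegral_ofReal hρ.integrableOn_Icc]
        filter_upwards [ae_restrict_mem measurableSet_Icc] with t ht
        exact pow_nonneg (capSliceRadius_nonneg hh0.le ht.1) m
    _ ≤ _ := by
        gcongr
        exact integral_capSliceRadius_pow_le m hh0 hh1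

theorem measure_cap_le {m : ℕ} (hm : 0 < m) (σ : Measure (Euc (m + 1))) [IsProbabilityMeasure σ]
    (hσsph : σ (sphere (0 : Euc (m + 1)) 1)ᶜ = 0)
    (hσinv : ∀ e : Euc (m + 1) ≃ₗᵢ[ℝ] Euc (m + 1), σ.map e = σ)
    {u : Euc (m + 1)} (hu : ‖u‖ = 1) {h : ℝ} (hh0 : 0 < h) (hh1 : h < 1) :
    σ {θ | h ≤ ⟪u, θ⟫} ≤ ENNReal.ofReal ((1 - h ^ 2) ^ ((m : ℝ) / 2) / (h * √m)) := by
  set e₀ : Euc (m + 1) := EuclideanSpace.single 0 1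
  have he₀ : ‖e₀‖ = 1 := by simp [e₀]
  have hcone : σ {θ | h ≤ ⟪e₀, θ⟫} * volume (ball (0 : Euc (m + 1)) 1) =
      volume {x : Euc (m + 1) | h * ‖x‖ ≤ x 0 ∧ ‖x‖ < 1} := by
    simpa [e₀, EuclideanSpace.inner_single_left] using
      measure_cap_mul_volume_ball σ hσsph hσinv h he₀
  have hratio : (1 - h ^ 2) ^ ((m : ℝ) / 2) / (h * (m + 1)) * √((m + 2) / (2 * π)) ≤
      (1 - h ^ 2) ^ ((m : ℝ) / 2) / (h * √m) := by
    have h1h : 0 ≤ 1 - h ^ 2 := by nlinarith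
    rw [div_mul_eq_mul_div, div_le_div_iff₀ (by positivity) (by positivity)]
    calc (1 - h ^ 2) ^ ((m : ℝ) / 2) * √((m + 2) / (2 * π)) * (h * √m)
        = (1 - h ^ 2) ^ ((m : ℝ) / 2) * h * (√((m + 2) / (2 * π)) * √m) := by ring
      _ ≤ (1 - h ^ 2) ^ ((m : ℝ) / 2) * h * (m + 1) := by
          gcongr
          exact sqrt_div_two_pi_mul_sqrt_le m
      _ = (1 - h ^ 2) ^ ((m : ℝ) / 2) * (h * (m + 1)) := by ring
  refine (measure_setOf_norm_inner_eq_of_norm_eq σ hσinv (fun _ s => h ≤ s)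
    (hu.trans he₀.symm)).trans_le ?_
  rw [← ENNReal.mul_le_mul_iff_left (measure_ball_pos volume (0 : Euc (m + 1)) one_pos).ne'
    measure_ball_lt_top.ne, hcone]
  calc volume {x : Euc (m + 1) | h * ‖x‖ ≤ x 0 ∧ ‖x‖ < 1}
      ≤ ENNReal.ofReal ((1 - h ^ 2) ^ ((m : ℝ) / 2) / (h * (m + 1))) *
          volume (ball (0 : Euc m) 1) := volume_cone_le m hh0 hh1
    _ ≤ ENNReal.ofReal ((1 - h ^ 2) ^ ((m : ℝ) / 2) / (h * (m + 1))) *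
          (ENNReal.ofReal √((m + 2) / (2 * π)) * volume (ball (0 : Euc (m + 1)) 1)) := by
        gcongr
        exact volume_ball_le_mul_volume_ball_succ hm
    _ ≤ _ := by
        have h1h : 0 ≤ 1 - h ^ 2 := by nlinarith
        rw [← mul_assoc, ← ENNReal.ofReal_mul (by positivity)]
        gcongr

/-- For `n ≥ 2`, `u ∈ S^{n−1}` and `h ∈ (0,1)`, the rotation-invariant probability
measure of the spherical cap `C(u,h) = {θ ∈ S^{n−1} : ⟨u,θ⟩ ≥ h}` is at most
`(2(1−h))^{(n−1)/2} / (h√(n−1))`. -/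
theorem measure_of_cap_le {n : ℕ} (hn : 2 ≤ n)
    (u : Euc n) (hu : u ∈ sphere (0 : Euc n) 1)
    (h : ℝ) (hh : h ∈ Set.Ioo (0 : ℝ) 1)
    (σ : Measure (Euc n)) [IsProbabilityMeasure σ]
    (hσsph : σ (sphere (0 : Euc n) 1)ᶜ = 0)
    (hσinv : ∀ e : Euc n ≃ₗᵢ[ℝ] Euc n, σ.map e = σ) :
    (σ {θ | θ ∈ sphere (0 : Euc n) 1 ∧ h ≤ ⟪u, θ⟫}).toReal ≤
      (2 * (1 - h)) ^ (((n : ℝ) - 1) / 2) / (h * Real.sqrt ((n : ℝ) - 1)) := by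
  obtain ⟨hh0, hh1⟩ := hh
  obtain ⟨m, rfl⟩ : ∃ m, n = m + 1 := ⟨n - 1, by omega⟩
  rw [show ((m + 1 : ℕ) : ℝ) - 1 = m by push_cast; ring]
  calc (σ {θ | θ ∈ sphere (0 : Euc (m + 1)) 1 ∧ h ≤ ⟪u, θ⟫}).toReal
      ≤ (σ {θ | h ≤ ⟪u, θ⟫}).toReal :=
        ENNReal.toReal_mono (measure_ne_top _ _) (measure_mono fun θ hθ => hθ.2)
    _ ≤ (1 - h ^ 2) ^ ((m : ℝ) / 2) / (h * √m) :=
        ENNReal.toReal_le_of_le_ofReal (div_nonneg (rpow_nonneg (by nlinarith) _) (by positivity))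
          (measure_cap_le (by omega) σ hσsph hσinv (mem_sphere_zero_iff_norm.1 hu) hh0 hh1)
    _ ≤ (2 * (1 - h)) ^ ((m : ℝ) / 2) / (h * √m) := by gcongr <;> nlinarith
end

section
/- Let n ≥ 2, u ∈ S^{n−1}, and h ∈ (0,1). Then σ(C(u,h)) < ( (1−h²)^{(n−1)/2} / (n·h) ) · ( κ_{n−1} / κ_n ), where C(u,h) = {θ ∈ S^{n−1} : ⟨u,θ⟩ ≥ h}, σ is the rotation-invariant probability measure on S^{n−1}, and κ_m denotes the m-dimensional Lebesgue volume of the m-dimensional Euclidean unit ball. -/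
open Metric Set MeasureTheory
open scoped RealInnerProductSpace ENNReal Pointwise

/-- `κ_m`: the Lebesgue volume of the `m`-dimensional Euclidean unit ball. -/
noncomputable def kappa (m : ℕ) : ℝ :=
  (volume (closedBall (0 : EuclideanSpace ℝ (Fin m)) 1)).toReal

/-!
Count the pairs `(θ, x)` of a unit vector and a point of the unit ball with `x ∈ ℝ₊ · C(θ, h)`
in two ways under `σ ⊗ volume`. Rotation invariance of `σ` and of `volume` gives
`σ(C(u, h)) · κ_n = vol(S)`, where `S` is the cone over the cap `C(e₀, h)` inside the unit ball.
The slice of `S` at `x₀ = s` is contained in an `(n-1)`-ball of radius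
`min (√(1 - s²)) (s √(1 - h²) / h)`, so
`vol(S) ≤ κ_{n-1} (∫₀ʰ (s √(1 - h²) / h)^{n-1} ds + ∫ₕ¹ (1 - s²)^{(n-1)/2} ds)`.
The first integral is `h (1 - h²)^{(n-1)/2} / n`; bounding the second integrand by
`(s / h) (1 - s²)^{(n-1)/2}` makes it at most `(1 - h²)^{(n+1)/2} / ((n + 1) h)`, and the two
add up to less than `(1 - h²)^{(n-1)/2} / (n h)`.
-/

open Real intervalIntegral

theorem hasDerivAt_sqrt_one_sub_sq_pow (k : ℕ) {s : ℝ} (hs : s ∈ Ioo (-1 : ℝ) 1) :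
    HasDerivAt (fun t : ℝ => √(1 - t ^ 2) ^ (k + 2)) (-((k + 2) * (s * √(1 - s ^ 2) ^ k))) s := by
  have hpos : 0 < 1 - s ^ 2 := by nlinarith [hs.1, hs.2]
  have hne : √(1 - s ^ 2) ≠ 0 := (sqrt_pos.2 hpos).ne'
  have hsqrt : HasDerivAt (fun t : ℝ => √(1 - t ^ 2)) (-s / √(1 - s ^ 2)) s :=
    (((hasDerivAt_pow 2 s).const_sub 1).sqrt hpos.ne').congr_deriv (by field_simp; ring)
  refine (hsqrt.fun_pow (k + 2)).congr_deriv ?_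
  rw [show k + 2 - 1 = k + 1 by omega]
  field_simp
  push_cast
  ring

theorem integral_mul_sqrt_one_sub_sq_pow (k : ℕ) {a : ℝ} (ha : a ∈ Icc (-1 : ℝ) 1) :
    ∫ s in a..1, s * √(1 - s ^ 2) ^ k = √(1 - a ^ 2) ^ (k + 2) / (k + 2) := by
  rw [integral_eq_sub_of_hasDerivAt_of_le ha.2
    (f := fun s => -(√(1 - s ^ 2) ^ (k + 2) / (k + 2))) (by fun_prop)
    (fun s hs => ?_) (by apply Continuous.intervalIntegrable; fun_prop)]
  · simp
  · refine ((hasDerivAt_sqrt_one_sub_sq_pow k ⟨ha.1.trans_lt hs.1, hs.2⟩).div_const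
      ((k : ℝ) + 2)).fun_neg.congr_deriv ?_
    field_simp

theorem integral_sqrt_one_sub_sq_pow_lt (k : ℕ) {h : ℝ} (hh : h ∈ Ioo (0 : ℝ) 1) :
    ∫ s in h..1, √(1 - s ^ 2) ^ k < √(1 - h ^ 2) ^ (k + 2) / ((k + 1) * h) := by
  obtain ⟨hh0, hh1⟩ := hh
  have hD : 0 < √(1 - h ^ 2) := sqrt_pos.2 (by nlinarith)
  calc ∫ s in h..1, √(1 - s ^ 2) ^ k
      ≤ ∫ s in h..1, s * √(1 - s ^ 2) ^ k / h := by
        refine integral_mono_on hh1.le (by apply Continuous.intervalIntegrable; fun_prop)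
          (by apply Continuous.intervalIntegrable; fun_prop) fun s hs => ?_
        rw [le_div_iff₀ hh0, mul_comm]
        exact mul_le_mul_of_nonneg_right hs.1 (by positivity)
    _ = √(1 - h ^ 2) ^ (k + 2) / ((k + 2) * h) := by
        rw [intervalIntegral.integral_div, integral_mul_sqrt_one_sub_sq_pow k ⟨by linarith, hh1.le⟩,
          div_div]
    _ < √(1 - h ^ 2) ^ (k + 2) / ((k + 1) * h) := by
        gcongr
        linarith

theorem integral_min_sqrt_one_sub_sq_pow_lt (k : ℕ) {h : ℝ} (hh : h ∈ Ioo (0 : ℝ) 1) :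
    ∫ s in (0 : ℝ)..1, min √(1 - s ^ 2) (√(1 - h ^ 2) / h * s) ^ k <
      √(1 - h ^ 2) ^ k / ((k + 1) * h) := by
  obtain ⟨hh0, hh1⟩ := hh
  set D := √(1 - h ^ 2)
  have hD2 : D ^ 2 = 1 - h ^ 2 := sq_sqrt (by nlinarith)
  have hint (a b : ℝ) :
      IntervalIntegrable (fun s => min √(1 - s ^ 2) (D / h * s) ^ k) volume a b := by
    apply Continuous.intervalIntegrable; fun_prop
  have hcone : ∫ s in (0 : ℝ)..h, (D / h * s) ^ k = D ^ k * h / (k + 1) := by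
    simp_rw [mul_pow, div_pow, intervalIntegral.integral_const_mul, integral_pow]
    field_simp
    ring
  calc ∫ s in (0 : ℝ)..1, min √(1 - s ^ 2) (D / h * s) ^ k
      = (∫ s in (0 : ℝ)..h, min √(1 - s ^ 2) (D / h * s) ^ k)
        + ∫ s in h..1, min √(1 - s ^ 2) (D / h * s) ^ k :=
        (integral_add_adjacent_intervals (hint 0 h) (hint h 1)).symm
    _ ≤ (∫ s in (0 : ℝ)..h, (D / h * s) ^ k) + ∫ s in h..1, √(1 - s ^ 2) ^ k := by
        gcongr
        · refine integral_mono_on hh0.le (hint 0 h)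
            (by apply Continuous.intervalIntegrable; fun_prop) fun s hs => ?_
          exact pow_le_pow_left₀ (le_min (sqrt_nonneg _) (mul_nonneg (by positivity) hs.1))
            (min_le_right _ _) k
        · refine integral_mono_on hh1.le (hint h 1)
            (by apply Continuous.intervalIntegrable; fun_prop) fun s hs => ?_
          exact pow_le_pow_left₀ (le_min (sqrt_nonneg _)
            (mul_nonneg (by positivity) (hh0.le.trans hs.1))) (min_le_left _ _) k
    _ < D ^ k * h / (k + 1) + D ^ (k + 2) / ((k + 1) * h) := by
        rw [hcone]
        gcongr
        exact integral_sqrt_one_sub_sq_pow_lt k ⟨hh0, hh1⟩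
    _ = D ^ k / ((k + 1) * h) := by
        rw [pow_add, hD2]
        field_simp
        ring

def finSuccMeasurableEquiv (k : ℕ) : Euc (k + 1) ≃ᵐ ℝ × (Fin k → ℝ) :=
  (MeasurableEquiv.toLp 2 (Fin (k + 1) → ℝ)).symm.trans
    (MeasurableEquiv.piFinSuccAbove (fun _ => ℝ) 0)

theorem finSuccMeasurableEquiv_apply {k : ℕ} (x : Euc (k + 1)) :
    finSuccMeasurableEquiv k x = (x 0, fun j => x j.succ) := by
  refine Prod.ext rfl (funext fun j => ?_)
  show x ((0 : Fin (k + 1)).succAbove j) = x j.succ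
  rw [Fin.zero_succAbove]

theorem measurePreserving_finSuccMeasurableEquiv (k : ℕ) :
    MeasurePreserving (finSuccMeasurableEquiv k) volume (volume.prod volume) := by
  have h := measurePreserving_piFinSuccAbove (fun _ : Fin (k + 1) => (volume : Measure ℝ)) 0
  rw [← volume_pi, ← volume_pi] at h
  exact h.comp (EuclideanSpace.volume_preserving_symm_measurableEquiv_toLp (Fin (k + 1)))

theorem norm_sq_eq_sq_add_norm_sq_finSuccMeasurableEquiv {k : ℕ} (x : Euc (k + 1)) :
    ‖x‖ ^ 2 = x 0 ^ 2 + ‖WithLp.toLp 2 (finSuccMeasurableEquiv k x).2‖ ^ 2 := by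
  simp [EuclideanSpace.norm_sq_eq, finSuccMeasurableEquiv_apply, Fin.sum_univ_succ]

theorem volume_le_setLIntegral_volume_closedBall {k : ℕ} {A : Set (Euc (k + 1))}
    (hA : MeasurableSet A) {I : Set ℝ} (hI : MeasurableSet I) {r : ℝ → ℝ}
    (hr : ∀ s ∈ I, 0 ≤ r s) (hAr : ∀ x ∈ A, x 0 ∈ I ∧ ‖x‖ ^ 2 ≤ x 0 ^ 2 + r (x 0) ^ 2) :
    volume A ≤ ∫⁻ s in I, volume (closedBall (0 : Euc k) (r s)) := by
  have hslice : ∀ s, volume (Prod.mk s ⁻¹' ((finSuccMeasurableEquiv k).symm ⁻¹' A))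
      ≤ I.indicator (fun s => volume (closedBall (0 : Euc k) (r s))) s := by
    intro s
    have hmem : ∀ y, (finSuccMeasurableEquiv k).symm (s, y) ∈ A →
        s ∈ I ∧ ‖WithLp.toLp 2 y‖ ^ 2 ≤ r s ^ 2 := by
      intro y hy
      have hxy := (finSuccMeasurableEquiv k).apply_symm_apply (s, y)
      have h0 : ((finSuccMeasurableEquiv k).symm (s, y)) 0 = s := by
        simpa only [finSuccMeasurableEquiv_apply] using congrArg Prod.fst hxy
      have hx := hAr _ hy
      rw [norm_sq_eq_sq_add_norm_sq_finSuccMeasurableEquiv, hxy, h0] at hx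
      exact ⟨hx.1, by linarith [hx.2]⟩
    by_cases hs : s ∈ I
    · rw [indicator_of_mem hs,
        ← (PiLp.volume_preserving_toLp (Fin k)).measure_preimage
          measurableSet_closedBall.nullMeasurableSet]
      refine measure_mono fun y hy => ?_
      rw [mem_preimage, mem_closedBall_zero_iff]
      exact (sq_le_sq₀ (norm_nonneg _) (hr s hs)).1 (hmem y hy).2
    · have hempty : Prod.mk s ⁻¹' ((finSuccMeasurableEquiv k).symm ⁻¹' A) = ∅ :=
        eq_empty_of_forall_notMem fun y hy => hs (hmem y hy).1
      rw [indicator_of_notMem hs, hempty, measure_empty]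
  calc volume A = (volume.prod volume) ((finSuccMeasurableEquiv k).symm ⁻¹' A) :=
        ((measurePreserving_finSuccMeasurableEquiv k).symm _).measure_preimage_equiv A |>.symm
    _ = ∫⁻ s, volume (Prod.mk s ⁻¹' ((finSuccMeasurableEquiv k).symm ⁻¹' A)) :=
        Measure.prod_apply (hA.preimage (finSuccMeasurableEquiv k).symm.measurable)
    _ ≤ ∫⁻ s, I.indicator (fun s => volume (closedBall (0 : Euc k) (r s))) s :=
        lintegral_mono hslice
    _ = ∫⁻ s in I, volume (closedBall (0 : Euc k) (r s)) := lintegral_indicator hI _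

section SphericalCap

variable {E : Type*} [NormedAddCommGroup E] [InnerProductSpace ℝ E]

def sphericalCap (w : E) (h : ℝ) : Set E := {θ | θ ∈ sphere (0 : E) 1 ∧ h ≤ ⟪w, θ⟫}

/-- The cone over `sphericalCap w h` with apex `0`, truncated by the open unit ball. -/
def sphericalSector (w : E) (h : ℝ) : Set E := {x | ‖x‖ < 1 ∧ h * ‖x‖ ≤ ⟪w, x⟫}

theorem preimage_sphericalCap (e : E ≃ₗᵢ[ℝ] E) (w : E) (h : ℝ) :
    e ⁻¹' sphericalCap w h = sphericalCap (e.symm w) h := by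
  ext θ
  simp [sphericalCap, ← e.inner_map_map (e.symm w)]

theorem preimage_sphericalSector (e : E ≃ₗᵢ[ℝ] E) (w : E) (h : ℝ) :
    e ⁻¹' sphericalSector w h = sphericalSector (e.symm w) h := by
  ext x
  simp [sphericalSector, ← e.inner_map_map (e.symm w)]

theorem sphericalCap_smul_inv_norm {x : E} (hx : x ≠ 0) (h : ℝ) :
    sphericalCap (‖x‖⁻¹ • x) h = {θ | h * ‖x‖ ≤ ⟪θ, x⟫} ∩ sphere (0 : E) 1 := by
  have hx' : 0 < ‖x‖ := norm_pos_iff.2 hx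
  ext θ
  simp only [sphericalCap, mem_ofPred_eq, mem_inter_iff, real_inner_smul_left,
    real_inner_comm x θ, ← div_eq_inv_mul, le_div_iff₀ hx']
  tauto

variable [MeasurableSpace E] [BorelSpace E]

theorem measurableSet_sphericalCap (w : E) (h : ℝ) : MeasurableSet (sphericalCap w h) :=
  isClosed_sphere.measurableSet.inter
    (measurableSet_le (g := fun θ : E => ⟪w, θ⟫) measurable_const (by fun_prop))

theorem measurableSet_sphericalSector (w : E) (h : ℝ) : MeasurableSet (sphericalSector w h) :=
  (measurableSet_lt (f := fun x : E => ‖x‖) (by fun_prop) measurable_const).inter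
    (measurableSet_le (f := fun x : E => h * ‖x‖) (g := fun x => ⟪w, x⟫) (by fun_prop)
      (by fun_prop))

theorem measure_preimage_linearIsometryEquiv {μ : Measure E}
    (hμ : ∀ e : E ≃ₗᵢ[ℝ] E, μ.map e = μ) (e : E ≃ₗᵢ[ℝ] E) {s : Set E} (hs : MeasurableSet s) :
    μ (e ⁻¹' s) = μ s := by
  rw [← Measure.map_apply e.continuous.measurable hs, hμ]

theorem measure_sphericalCap_congr {μ : Measure E} (hμ : ∀ e : E ≃ₗᵢ[ℝ] E, μ.map e = μ)
    {v w : E} (hvw : ‖v‖ = ‖w‖) (h : ℝ) : μ (sphericalCap v h) = μ (sphericalCap w h) := by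
  set e := Submodule.reflection (ℝ ∙ (v - w))ᗮ
  rw [← measure_preimage_linearIsometryEquiv hμ e (measurableSet_sphericalCap w h),
    preimage_sphericalCap, ← Submodule.reflection_sub hvw, e.symm_apply_apply]

theorem measure_sphericalSector_congr {μ : Measure E} (hμ : ∀ e : E ≃ₗᵢ[ℝ] E, μ.map e = μ)
    {v w : E} (hvw : ‖v‖ = ‖w‖) (h : ℝ) : μ (sphericalSector v h) = μ (sphericalSector w h) := by
  set e := Submodule.reflection (ℝ ∙ (v - w))ᗮ
  rw [← measure_preimage_linearIsometryEquiv hμ e (measurableSet_sphericalSector w h),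
    preimage_sphericalSector, ← Submodule.reflection_sub hvw, e.symm_apply_apply]

variable {σ : Measure E}

theorem measure_setOf_mem_sphericalSector (hσsph : σ (sphere (0 : E) 1)ᶜ = 0)
    (hσinv : ∀ e : E ≃ₗᵢ[ℝ] E, σ.map e = σ) {u : E} (hu : ‖u‖ = 1) (h : ℝ) {x : E} (hx : x ≠ 0) :
    σ {θ | x ∈ sphericalSector θ h} =
      (ball (0 : E) 1).indicator (fun _ => σ (sphericalCap u h)) x := by
  by_cases hx1 : x ∈ ball (0 : E) 1
  · have hslice : {θ | x ∈ sphericalSector θ h} = {θ | h * ‖x‖ ≤ ⟪θ, x⟫} := by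
      ext θ
      simp_all [sphericalSector]
    rw [indicator_of_mem hx1, hslice, ← measure_inter_conull hσsph,
      ← sphericalCap_smul_inv_norm hx, measure_sphericalCap_congr hσinv (w := u)
        (by simp [norm_smul, hx, hu])]
  · have hslice : {θ | x ∈ sphericalSector θ h} = ∅ := by
      ext θ
      simp_all [sphericalSector]
    rw [indicator_of_notMem hx1, hslice, measure_empty]

variable [FiniteDimensional ℝ E]

theorem measure_sphericalCap_mul_volume_ball [IsProbabilityMeasure σ]
    (hσsph : σ (sphere (0 : E) 1)ᶜ = 0) (hσinv : ∀ e : E ≃ₗᵢ[ℝ] E, σ.map e = σ)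
    {u : E} (hu : ‖u‖ = 1) (h : ℝ) :
    σ (sphericalCap u h) * volume (ball (0 : E) 1) = volume (sphericalSector u h) := by
  have : Nontrivial E := ⟨u, 0, by rintro rfl; simp at hu⟩
  have hvol : ∀ e : E ≃ₗᵢ[ℝ] E, (volume : Measure E).map e = volume :=
    fun e => e.measurePreserving.map_eq
  set S : Set (E × E) := {p | p.2 ∈ sphericalSector p.1 h}
  have hS : MeasurableSet S :=
    (measurableSet_lt (f := fun p : E × E => ‖p.2‖) (by fun_prop) measurable_const).inter
      (measurableSet_le (f := fun p : E × E => h * ‖p.2‖) (g := fun p => ⟪p.1, p.2⟫)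
        (by fun_prop) (by fun_prop))
  have hθ : ∀ᵐ θ ∂σ, volume (Prod.mk θ ⁻¹' S) = volume (sphericalSector u h) := by
    filter_upwards [mem_ae_iff.2 hσsph] with θ hθ
    exact measure_sphericalSector_congr hvol (by simpa [hu] using hθ) h
  have hx : ∀ᵐ x, σ ((fun θ => (θ, x)) ⁻¹' S) =
      (ball (0 : E) 1).indicator (fun _ => σ (sphericalCap u h)) x := by
    filter_upwards [compl_mem_ae_iff.2 (measure_singleton (0 : E))] with x hx
    exact measure_setOf_mem_sphericalSector hσsph hσinv hu h hx
  calc σ (sphericalCap u h) * volume (ball (0 : E) 1)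
      = ∫⁻ x, σ ((fun θ => (θ, x)) ⁻¹' S) := by
        rw [lintegral_congr_ae hx, lintegral_indicator measurableSet_ball, setLIntegral_const]
    _ = (σ.prod volume) S := (Measure.prod_apply_symm hS).symm
    _ = ∫⁻ θ, volume (Prod.mk θ ⁻¹' S) ∂σ := Measure.prod_apply hS
    _ = volume (sphericalSector u h) := by
        rw [lintegral_congr_ae hθ, lintegral_const, measure_univ, mul_one]

end SphericalCap

theorem volume_sphericalSector_single_lt {k : ℕ} {h : ℝ} (hh : h ∈ Ioo (0 : ℝ) 1) :
    volume (sphericalSector (EuclideanSpace.single 0 1 : Euc (k + 1)) h) <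
      ENNReal.ofReal (√(1 - h ^ 2) ^ k / ((k + 1) * h)) * volume (closedBall (0 : Euc k) 1) := by
  obtain ⟨hh0, hh1⟩ := hh
  set D := √(1 - h ^ 2)
  have hD2 : D ^ 2 = 1 - h ^ 2 := sq_sqrt (by nlinarith)
  set r : ℝ → ℝ := fun s => min √(1 - s ^ 2) (D / h * s)
  have hr : ∀ s ∈ Ico (0 : ℝ) 1, 0 ≤ r s := fun s hs =>
    le_min (sqrt_nonneg _) (mul_nonneg (by positivity) hs.1)
  have hsector : ∀ x ∈ sphericalSector (EuclideanSpace.single 0 1 : Euc (k + 1)) h,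
      x 0 ∈ Ico (0 : ℝ) 1 ∧ ‖x‖ ^ 2 ≤ x 0 ^ 2 + r (x 0) ^ 2 := by
    rintro x ⟨hx1, hxh⟩
    rw [EuclideanSpace.inner_single_left, map_one, one_mul] at hxh
    have hx0 : x 0 ≤ ‖x‖ := (le_abs_self _).trans (PiLp.norm_apply_le x 0)
    have hx0' : 0 ≤ x 0 := (by positivity : 0 ≤ h * ‖x‖).trans hxh
    have hball : ‖x‖ ^ 2 ≤ x 0 ^ 2 + √(1 - x 0 ^ 2) ^ 2 := by
      rw [sq_sqrt (by nlinarith)]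
      nlinarith
    have hcone : ‖x‖ ^ 2 ≤ x 0 ^ 2 + (D / h * x 0) ^ 2 := by
      have hxh2 : (h * ‖x‖) ^ 2 ≤ x 0 ^ 2 := pow_le_pow_left₀ (by positivity) hxh 2
      have : x 0 ^ 2 + (D / h * x 0) ^ 2 = x 0 ^ 2 / h ^ 2 := by
        rw [mul_pow, div_pow, hD2]
        field_simp
        ring
      rw [this, le_div_iff₀ (by positivity)]
      linarith
    refine ⟨⟨hx0', by linarith⟩, ?_⟩
    rcases min_cases √(1 - x 0 ^ 2) (D / h * x 0) with ⟨hmin, -⟩ | ⟨hmin, -⟩ <;>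
      simpa only [r, hmin]
  have hK : volume (closedBall (0 : Euc k) 1) ≠ ⊤ := measure_closedBall_lt_top.ne
  have hK0 : volume (closedBall (0 : Euc k) 1) ≠ 0 := (measure_closedBall_pos _ _ one_pos).ne'
  calc volume (sphericalSector (EuclideanSpace.single 0 1 : Euc (k + 1)) h)
      ≤ ∫⁻ s in Ico (0 : ℝ) 1, volume (closedBall (0 : Euc k) (r s)) :=
        volume_le_setLIntegral_volume_closedBall (measurableSet_sphericalSector _ _)
          measurableSet_Ico hr hsector
    _ = ENNReal.ofReal (∫ s in (0 : ℝ)..1, r s ^ k) * volume (closedBall (0 : Euc k) 1) := by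
        have hint : IntegrableOn (fun s => r s ^ k) (Ico 0 1) :=
          (Continuous.integrableOn_Icc (by fun_prop)).mono_set Ico_subset_Icc_self
        rw [intervalIntegral.integral_of_le zero_le_one, integral_Ioc_eq_integral_Ioo,
          ← integral_Ico_eq_integral_Ioo, ofReal_integral_eq_lintegral_ofReal hint
            (ae_restrict_of_forall_mem measurableSet_Ico fun s hs => pow_nonneg (hr s hs) k),
          ← lintegral_mul_const' _ _ hK]
        refine setLIntegral_congr_fun measurableSet_Ico fun s hs => ?_
        rw [Measure.addHaar_closedBall' _ _ (hr s hs), finrank_euclideanSpace_fin]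
    _ < ENNReal.ofReal (D ^ k / ((k + 1) * h)) * volume (closedBall (0 : Euc k) 1) := by
        gcongr
        have hD : 0 < D := sqrt_pos.2 (by nlinarith)
        exact (ENNReal.ofReal_lt_ofReal_iff (by positivity)).2
          (integral_min_sqrt_one_sub_sq_pow_lt k ⟨hh0, hh1⟩)

theorem measure_of_cap_lt_general {n : ℕ}
    (u : Euc n) (hu : u ∈ sphere (0 : Euc n) 1)
    (h : ℝ) (hh : h ∈ Set.Ioo (0 : ℝ) 1)
    (σ : Measure (Euc n)) [IsProbabilityMeasure σ]
    (hσsph : σ (sphere (0 : Euc n) 1)ᶜ = 0)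
    (hσinv : ∀ e : Euc n ≃ₗᵢ[ℝ] Euc n, σ.map e = σ) :
    (σ {θ | θ ∈ sphere (0 : Euc n) 1 ∧ h ≤ ⟪u, θ⟫}).toReal <
      (1 - h ^ 2) ^ (((n : ℝ) - 1) / 2) / (n * h) * (kappa (n - 1) / kappa n) := by
  obtain ⟨hh0, hh1⟩ := hh
  have hu1 : ‖u‖ = 1 := by simpa using hu
  obtain ⟨k, rfl⟩ : ∃ k, n = k + 1 :=
    Nat.exists_eq_succ_of_ne_zero (by rintro rfl; simp [Subsingleton.elim u 0] at hu1)
  have hdouble := measure_sphericalCap_mul_volume_ball hσsph hσinv hu1 h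
  rw [measure_sphericalSector_congr (fun e => e.measurePreserving.map_eq)
    (w := EuclideanSpace.single 0 1) (by simp [hu1])] at hdouble
  have hlt := ENNReal.toReal_strict_mono
    (ENNReal.mul_ne_top ENNReal.ofReal_ne_top measure_closedBall_lt_top.ne)
    (hdouble ▸ volume_sphericalSector_single_lt (k := k) ⟨hh0, hh1⟩)
  rw [ENNReal.toReal_mul, ENNReal.toReal_mul, ENNReal.toReal_ofReal (by positivity),
    ← Measure.addHaar_closedBall_eq_addHaar_ball] at hlt
  have hκ : 0 < kappa (k + 1) :=
    ENNReal.toReal_pos (measure_closedBall_pos _ _ one_pos).ne' measure_closedBall_lt_top.ne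
  change (σ (sphericalCap u h)).toReal < _
  rw [Nat.add_sub_cancel, rpow_div_two_eq_sqrt _ (by nlinarith), Nat.cast_add_one,
    add_sub_cancel_right, rpow_natCast, ← mul_div_assoc, lt_div_iff₀ hκ]
  exact hlt

/-- For `n ≥ 2`, `u ∈ S^{n−1}` and `h ∈ (0,1)`, the rotation-invariant probability
measure of the cap `C(u,h)` is strictly less than
`((1−h²)^{(n−1)/2} / (nh)) · (κ_{n−1}/κ_n)`. -/
theorem measure_of_cap_lt {n : ℕ} (hn : 2 ≤ n)
    (u : Euc n) (hu : u ∈ sphere (0 : Euc n) 1)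
    (h : ℝ) (hh : h ∈ Set.Ioo (0 : ℝ) 1)
    (σ : Measure (Euc n)) [IsProbabilityMeasure σ]
    (hσsph : σ (sphere (0 : Euc n) 1)ᶜ = 0)
    (hσinv : ∀ e : Euc n ≃ₗᵢ[ℝ] Euc n, σ.map e = σ) :
    (σ {θ | θ ∈ sphere (0 : Euc n) 1 ∧ h ≤ ⟪u, θ⟫}).toReal <
      (1 - h ^ 2) ^ (((n : ℝ) - 1) / 2) / (n * h) * (kappa (n - 1) / kappa n) :=
  measure_of_cap_lt_general u hu h hh σ hσsph hσinv
end

section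
/- Let P ⊂ ℝⁿ be a polytope containing r·B₂ⁿ for some r ∈ (0,1], covered as P ⊂ ⋃_{i=1}^N (x_i + B₂ⁿ) with x₁,…,x_N ∈ ℝⁿ, and let ε ∈ (0,1). Suppose θ ∈ S^{n−1} satisfies |⟨x_i/|x_i|, θ⟩| ≤ ε for every i with x_i ≠ 0, and suppose the boundary point ρ_P(θ)·θ lies in the relative interior of some facet F of P with outer unit normal u_F. Then ⟨u_F, θ⟩ ≥ r·√(1−ε²); in particular, θ lies in the cap C(u_F, r√(1−ε²)), so the set of such θ is covered by the caps at height r√(1−ε²) around the facet normals of P. -/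
open Metric Set MeasureTheory
open scoped RealInnerProductSpace ENNReal Pointwise

/-- Let `P ⊆ ℝⁿ` be a polytope containing `r·B₂ⁿ` (`r ∈ (0,1]`), covered by unit balls
centered at `x₁, …, x_N`, and let `ε ∈ (0,1)`. If `θ ∈ S^{n−1}` is `ε`-orthogonal to
every normalized center, and `ρ_P(θ)·θ` lies in the relative interior of a facet `F` of
`P` with outer unit normal `u`, then `⟨u, θ⟩ ≥ r√(1−ε²)`, i.e. `θ` lies in the cap
`C(u, r√(1−ε²))`. -/
theorem theta_in_cap_of_facet_normal {n : ℕ}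
    (V : Finset (Euc n)) (P : Set (Euc n)) (hP : P = convexHull ℝ (V : Set (Euc n)))
    (hPint : (interior P).Nonempty)
    (r : ℝ) (hr : r ∈ Set.Ioc (0 : ℝ) 1) (hball : closedBall (0 : Euc n) r ⊆ P)
    (N : ℕ) (x : Fin N → Euc n)
    (hcover : P ⊆ ⋃ i, x i +ᵥ closedBall (0 : Euc n) 1)
    (ε : ℝ) (hε : ε ∈ Set.Ioo (0 : ℝ) 1)
    (θ : Euc n) (hθ : θ ∈ sphere (0 : Euc n) 1)
    (hortho : ∀ i, x i ≠ 0 → |⟪‖x i‖⁻¹ • x i, θ⟫| ≤ ε)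
    (F : Set (Euc n)) (hF : IsFacet P F)
    (u : Euc n) (hu : u ∈ sphere (0 : Euc n) 1)
    (huF : F ⊆ {y : Euc n | ⟪y, u⟫ = suppFn P u})
    (hrelint : radialFn P θ • θ ∈ intrinsicInterior ℝ F) :
    r * Real.sqrt (1 - ε ^ 2) ≤ ⟪u, θ⟫ ∧
      θ ∈ {η | η ∈ sphere (0 : Euc n) 1 ∧ r * Real.sqrt (1 - ε ^ 2) ≤ ⟪u, η⟫} := by
  obtain ⟨hr0, hr1⟩ := hr
  obtain ⟨hε0, hε1⟩ := hε
  have hθ1 : ‖θ‖ = 1 := by simpa using hθ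
  have hu1 : ‖u‖ = 1 := by simpa using hu
  set ρ := radialFn P θ with hρdef
  have hFP : F ⊆ P := hF.2.1.subset
  have hρF : ρ • θ ∈ F := intrinsicInterior_subset hrelint
  have hρP : ρ • θ ∈ P := hFP hρF
  have hPc : IsCompact P := hP ▸ V.finite_toSet.isCompact_convexHull (𝕜 := ℝ)
  obtain ⟨R, hR⟩ := isBounded_iff_forall_norm_le.mp hPc.isBounded
  -- r ≤ ρ
  have hSbdd : BddAbove {t : ℝ | 0 ≤ t ∧ t • θ ∈ P} := by
    refine ⟨R, fun t ht => ?_⟩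
    have h := hR _ ht.2
    rwa [norm_smul, hθ1, mul_one, Real.norm_eq_abs, abs_of_nonneg ht.1] at h
  have hrθP : r • θ ∈ P := hball (by
    simp [norm_smul, hθ1, abs_of_nonneg hr0.le])
  have hρr : r ≤ ρ := le_csSup hSbdd ⟨hr0.le, hrθP⟩
  have hρ0 : 0 < ρ := lt_of_lt_of_le hr0 hρr
  -- r ≤ suppFn P u
  have hbddim : BddAbove ((fun y => ⟪y, u⟫) '' P) := by
    refine ⟨R, ?_⟩
    rintro _ ⟨y, hy, rfl⟩
    calc ⟪y, u⟫ ≤ ‖y‖ * ‖u‖ := real_inner_le_norm y u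
      _ ≤ R := by rw [hu1, mul_one]; exact hR y hy
  have hruP : r • u ∈ P := hball (by
    simp [norm_smul, hu1, abs_of_nonneg hr0.le])
  have hsupp_ge : r ≤ suppFn P u := by
    have h1 := le_csSup hbddim ⟨r • u, hruP, rfl⟩
    have h2 : ⟪r • u, u⟫ = r := by
      rw [real_inner_smul_left, real_inner_self_eq_norm_sq, hu1]; ring
    have h1' : ⟪r • u, u⟫ ≤ suppFn P u := h1
    rwa [h2] at h1'
  have hkey : r ≤ ρ * ⟪u, θ⟫ := by
    have h3 : ⟪ρ • θ, u⟫ = suppFn P u := huF hρF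
    rw [real_inner_smul_left, real_inner_comm] at h3
    linarith [hsupp_ge, h3.ge, h3.le]
  -- cover bound : ρ^2 * (1 - ε^2) ≤ 1
  obtain ⟨i, hi⟩ := Set.mem_iUnion.mp (hcover hρP)
  obtain ⟨b, hb, hbe⟩ := hi
  have hdist : ‖ρ • θ - x i‖ ≤ 1 := by
    have hbv : ρ • θ - x i = b := by
      have : x i + b = ρ • θ := hbe
      rw [← this]; abel
    rw [hbv]
    simpa using hb
  have hsq : ρ ^ 2 - 2 * (ρ * ⟪θ, x i⟫) + ‖x i‖ ^ 2 ≤ 1 := by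
    have h2 : ‖ρ • θ - x i‖ ^ 2 ≤ 1 := by
      nlinarith [norm_nonneg (ρ • θ - x i)]
    rw [norm_sub_sq_real, real_inner_smul_left, norm_smul, hθ1, mul_one,
      Real.norm_eq_abs, abs_of_pos hρ0] at h2
    linarith
  have hip : ⟪θ, x i⟫ ≤ ε * ‖x i‖ := by
    rcases eq_or_ne (x i) 0 with h0 | h0
    · simp [h0]
    · have h4 := hortho i h0
      rw [real_inner_smul_left, abs_mul, abs_inv, abs_norm] at h4
      have hn : 0 < ‖x i‖ := norm_pos_iff.mpr h0
      have h5 : |⟪x i, θ⟫| ≤ ε * ‖x i‖ := by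
        rw [inv_mul_le_iff₀ hn] at h4
        linarith [h4]
      calc ⟪θ, x i⟫ = ⟪x i, θ⟫ := (real_inner_comm θ (x i)).symm
        _ ≤ |⟪x i, θ⟫| := le_abs_self _
        _ ≤ ε * ‖x i‖ := h5
  have hρbound : ρ ^ 2 * (1 - ε ^ 2) ≤ 1 := by
    nlinarith [sq_nonneg (ρ * ε - ‖x i‖), mul_le_mul_of_nonneg_left hip hρ0.le,
      norm_nonneg (x i)]
  -- combine
  set s := Real.sqrt (1 - ε ^ 2) with hs
  have hs0 : 0 ≤ s := Real.sqrt_nonneg _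
  have hs2 : s ^ 2 = 1 - ε ^ 2 := Real.sq_sqrt (by nlinarith)
  have hρs : ρ * s ≤ 1 := by nlinarith [mul_nonneg hρ0.le hs0]
  have hmain : r * s ≤ ⟪u, θ⟫ := by
    have h6 : r * s * ρ ≤ r := by nlinarith
    nlinarith
  exact ⟨hmain, hθ, hmain⟩
end
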